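/- arXiv:2302.10488 — 9 statements merged into one kernel-verified Lean document; each statement's English description precedes it below -/
import Mathlib

section
/- Suppose X_+ = A_s X_- + B_s U_- for some (A_s,B_s). Then rank(X_+ - λ X_-) = n for all λ ∈ ℂ if and only if every (A,B) with X_+ = A X_- + B U_- is controllable (i.e., rank[A - λI, B] = n for all λ ∈ ℂ). -/
/-!
If `(A, B)` explains the data, then `X₊ - λX₋ = [A - λI, B] [X₋; U₋]`, so a rank defect of
`[A - λI, B]` would be inherited by the data pencil. Conversely, take a left null vector
`η = p + i q` of `X₊ - λX₋`. If real rows `W` with right inverse `L` and a real matrix `J` satisfy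
`W X₊ = J W X₋`, then correcting `(A_s, B_s)` by `L (J W - W A_s)` and `-L W B_s` gives a
consistent system with `W A = J W` and `W B = 0`, and for a left eigenvector `ξ` of `J` the
vector `ξ W` is a left null vector of `[A - μI, B]`. If `p, q` are independent, take `W = [p; q]`,
`J` the rotation-scaling matrix of `λ` and `ξ = (1, i)`; otherwise some real `w ≠ 0` in their span
satisfies `w X₊ = (Re λ) w X₋`, and one takes `W = w`, `J = Re λ`.
-/

open Matrix Complex

namespace Matrix

section Field

variable {m n l o : Type*} [Fintype m] [Fintype n] {K : Type*} [Field K]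

theorem rank_eq_card_iff_linearIndependent_row (M : Matrix m n K) :
    M.rank = Fintype.card m ↔ LinearIndependent K M.row := by
  rw [M.rank_eq_finrank_span_row, linearIndependent_iff_card_eq_finrank_span, Set.finrank,
    eq_comm]

theorem rank_eq_card_iff_forall_vecMul_eq_zero (M : Matrix m n K) :
    M.rank = Fintype.card m ↔ ∀ η, η ᵥ* M = 0 → η = 0 := by
  rw [rank_eq_card_iff_linearIndependent_row, ← vecMul_injective_iff, ← coe_vecMulLinear,
    injective_iff_map_eq_zero]
  rfl

theorem exists_mul_eq_one_of_linearIndependent_row [LinearOrder K] [IsStrictOrderedRing K]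
    [DecidableEq m] {W : Matrix m n K} (hW : LinearIndependent K W.row) :
    ∃ L : Matrix n m K, W * L = 1 := by
  have hG : IsUnit (W * Wᵀ) := by
    rwa [← linearIndependent_rows_iff_isUnit, ← rank_eq_card_iff_linearIndependent_row,
      rank_self_mul_transpose, rank_eq_card_iff_linearIndependent_row]
  obtain ⟨G, hG⟩ := hG.exists_right_inv
  exact ⟨Wᵀ * G, by rw [← Matrix.mul_assoc, hG]⟩

theorem rank_sub_smul_le_rank_fromCols [Fintype l] [Fintype o] [DecidableEq n]
    {Xm Xp : Matrix n o K} {Um : Matrix l o K} {A : Matrix n n K} {B : Matrix n l K} (h : Xp = A * Xm + B * Um)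
    (z : K) : (Xp - z • Xm).rank ≤ (fromCols (A - z • 1) B).rank := by
  have hfactor : Xp - z • Xm = fromCols (A - z • 1) B * fromRows Xm Um := by
    rw [fromCols_mul_fromRows, Matrix.sub_mul, Matrix.smul_mul, Matrix.one_mul, h]
    abel
  rw [hfactor]
  exact rank_mul_le_left _ _

end Field

section CommRing

variable {k n l o : Type*} [Fintype k] [Fintype n] {R : Type*} [CommRing R]

theorem exists_eq_mul_add_mul_of_mul_eq_one [Fintype l] [DecidableEq k] {Xm Xp : Matrix n o R}
    {Um : Matrix l o R} {As : Matrix n n R} {Bs : Matrix n l R} (hdata : Xp = As * Xm + Bs * Um)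
    {W : Matrix k n R} {L : Matrix n k R} (hWL : W * L = 1) {J : Matrix k k R}
    (hJ : W * Xp = J * W * Xm) :
    ∃ (A : Matrix n n R) (B : Matrix n l R),
      Xp = A * Xm + B * Um ∧ W * A = J * W ∧ W * B = 0 := by
  refine ⟨As + L * (J * W - W * As), Bs - L * (W * Bs), ?_, ?_, ?_⟩
  · calc Xp = As * Xm + Bs * Um + L * (J * W * Xm - W * Xp) := by
          rw [← hJ, sub_self, Matrix.mul_zero, add_zero, hdata]
      _ = _ := by
          rw [hdata]
          simp only [Matrix.mul_add, Matrix.add_mul, Matrix.sub_mul, Matrix.mul_sub,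
            Matrix.mul_assoc]
          abel
  · rw [Matrix.mul_add, ← Matrix.mul_assoc, hWL, Matrix.one_mul, add_sub_cancel]
  · rw [Matrix.mul_sub, ← Matrix.mul_assoc, hWL, Matrix.one_mul, sub_self]

theorem vecMul_fromCols_sub_smul_eq_zero [DecidableEq n] {W : Matrix k n R} {J : Matrix k k R}
    {A : Matrix n n R} {B : Matrix n l R} (hA : W * A = J * W) (hB : W * B = 0)
    {ξ : k → R} {z : R} (hξ : ξ ᵥ* J = z • ξ) :
    (ξ ᵥ* W) ᵥ* fromCols (A - z • 1) B = 0 := by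
  have hξA : ξ ᵥ* W ᵥ* A = z • (ξ ᵥ* W) := by
    rw [vecMul_vecMul, hA, ← vecMul_vecMul, hξ, smul_vecMul]
  rw [vecMul_fromCols, vecMul_sub, hξA, vecMul_smul, vecMul_one, sub_self, vecMul_vecMul, hB,
    vecMul_zero, Sum.elim_zero_zero]

end CommRing

end Matrix

section RealData

variable {n m o : Type*} [Fintype n]

theorem re_vecMul_map_ofReal (η : n → ℂ) (M : Matrix n o ℝ) (j : o) :
    ((η ᵥ* M.map ofReal) j).re = ((fun i => (η i).re) ᵥ* M) j := by
  simp [vecMul, dotProduct, Complex.re_sum]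

theorem im_vecMul_map_ofReal (η : n → ℂ) (M : Matrix n o ℝ) (j : o) :
    ((η ᵥ* M.map ofReal) j).im = ((fun i => (η i).im) ᵥ* M) j := by
  simp [vecMul, dotProduct, Complex.im_sum]

theorem map_ofReal_mul {l : Type*} [Fintype l] (M : Matrix l n ℝ) (N : Matrix n o ℝ) :
    (M * N).map ofReal = M.map ofReal * N.map ofReal :=
  Matrix.map_mul (f := ofRealHom)

variable {Xm Xp : Matrix n o ℝ}

theorem vecMul_re_im_of_vecMul_map_ofReal_eq_smul {η : n → ℂ} {z : ℂ}
    (h : η ᵥ* Xp.map ofReal = z • (η ᵥ* Xm.map ofReal)) :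
    (fun i => (η i).re) ᵥ* Xp =
        z.re • ((fun i => (η i).re) ᵥ* Xm) - z.im • ((fun i => (η i).im) ᵥ* Xm) ∧
      (fun i => (η i).im) ᵥ* Xp =
        z.im • ((fun i => (η i).re) ᵥ* Xm) + z.re • ((fun i => (η i).im) ᵥ* Xm) := by
  constructor <;> funext j
  · simpa [← re_vecMul_map_ofReal, ← im_vecMul_map_ofReal] using congrArg Complex.re (congrFun h j)
  · simpa [← re_vecMul_map_ofReal, ← im_vecMul_map_ofReal, add_comm]
      using congrArg Complex.im (congrFun h j)

theorem of_pair_mul_eq_rotation_mul {p q : n → ℝ} {a b : ℝ}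
    (hp : p ᵥ* Xp = a • (p ᵥ* Xm) - b • (q ᵥ* Xm))
    (hq : q ᵥ* Xp = b • (p ᵥ* Xm) + a • (q ᵥ* Xm)) :
    Matrix.of ![p, q] * Xp = !![a, -b; b, a] * Matrix.of ![p, q] * Xm := by
  rw [Matrix.mul_assoc]
  simp only [cons_mul, empty_mul, hp, hq, cons_vecMul, empty_vecMul]
  simp [sub_eq_add_neg]

theorem vecMul_map_ofReal_rotation (a b : ℝ) :
    ![1, Complex.I] ᵥ* (!![a, -b; b, a] : Matrix (Fin 2) (Fin 2) ℝ).map ofReal =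
      (⟨a, b⟩ : ℂ) • ![1, Complex.I] := by
  ext i
  fin_cases i <;> simp [vecMul, dotProduct, Fin.sum_univ_two, Complex.ext_iff]

theorem exists_vecMul_eq_smul_of_not_linearIndependent_pair {p q : n → ℝ}
    (hpq : ¬LinearIndependent ℝ ![p, q]) (h0 : ¬(p = 0 ∧ q = 0)) {a b : ℝ}
    (hp : p ᵥ* Xp = a • (p ᵥ* Xm) - b • (q ᵥ* Xm))
    (hq : q ᵥ* Xp = b • (p ᵥ* Xm) + a • (q ᵥ* Xm)) :
    ∃ w ≠ 0, w ᵥ* Xp = a • (w ᵥ* Xm) := by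
  obtain ⟨s, t, hst, hne⟩ : ∃ s t : ℝ, s • p + t • q = 0 ∧ ¬(s = 0 ∧ t = 0) := by
    simpa [LinearIndependent.pair_iff] using hpq
  have hst2 : s ^ 2 + t ^ 2 ≠ 0 := by
    contrapose! hne
    constructor <;> nlinarith [sq_nonneg s, sq_nonneg t]
  -- `t • p - s • q = (t + s i) (p + i q)`, which is real because `s • p + t • q = 0`
  refine ⟨t • p - s • q, fun hw => h0 ⟨?_, ?_⟩, ?_⟩
  · refine (smul_eq_zero.mp ?_).resolve_left hst2
    linear_combination (norm := module) t • hw + s • hst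
  · refine (smul_eq_zero.mp ?_).resolve_left hst2
    linear_combination (norm := module) t • hst - s • hw
  · have hstX : s • (p ᵥ* Xm) + t • (q ᵥ* Xm) = 0 := by
      rw [← smul_vecMul, ← smul_vecMul, ← add_vecMul, hst, zero_vecMul]
    rw [sub_vecMul, sub_vecMul, smul_vecMul, smul_vecMul, smul_vecMul, smul_vecMul, hp, hq]
    linear_combination (norm := module) (-b) • hstX

variable [DecidableEq n] [Fintype m] {Um : Matrix m o ℝ} {As : Matrix n n ℝ} {Bs : Matrix n m ℝ}

theorem exists_consistent_rank_fromCols_ne {k : Type*} [Fintype k] [DecidableEq k]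
    (hdata : Xp = As * Xm + Bs * Um) {W : Matrix k n ℝ} (hW : LinearIndependent ℝ W.row)
    {J : Matrix k k ℝ} (hJ : W * Xp = J * W * Xm) {ξ : k → ℂ} (hξ0 : ξ ≠ 0) {z : ℂ}
    (hξ : ξ ᵥ* J.map ofReal = z • ξ) :
    ∃ (A : Matrix n n ℝ) (B : Matrix n m ℝ), Xp = A * Xm + B * Um ∧
      (fromCols (A.map ofReal - z • (1 : Matrix n n ℂ)) (B.map ofReal)).rank ≠ Fintype.card n := by
  obtain ⟨L, hWL⟩ := exists_mul_eq_one_of_linearIndependent_row hW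
  obtain ⟨A, B, hAB, hA, hB⟩ := exists_eq_mul_add_mul_of_mul_eq_one hdata hWL hJ
  refine ⟨A, B, hAB, fun hrank => hξ0 ?_⟩
  have hη : ξ ᵥ* W.map ofReal = 0 :=
    (rank_eq_card_iff_forall_vecMul_eq_zero _).mp hrank _ <|
      vecMul_fromCols_sub_smul_eq_zero (by rw [← map_ofReal_mul, hA, map_ofReal_mul])
        (by rw [← map_ofReal_mul, hB, Matrix.map_zero _ rfl]) hξ
  calc ξ = ξ ᵥ* (W * L).map ofReal := by rw [hWL, Matrix.map_one _ rfl rfl, vecMul_one]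
    _ = 0 := by rw [map_ofReal_mul, ← vecMul_vecMul, hη, zero_vecMul]

theorem exists_consistent_rank_fromCols_ne_of_rank_ne [Fintype o]
    (hdata : Xp = As * Xm + Bs * Um) {z : ℂ}
    (hz : (Xp.map ofReal - z • Xm.map ofReal).rank ≠ Fintype.card n) :
    ∃ (A : Matrix n n ℝ) (B : Matrix n m ℝ), Xp = A * Xm + B * Um ∧ ∃ z' : ℂ,
      (fromCols (A.map ofReal - z' • (1 : Matrix n n ℂ)) (B.map ofReal)).rank ≠ Fintype.card n := by
  obtain ⟨η, hη, hη0⟩ : ∃ η, η ᵥ* (Xp.map ofReal - z • Xm.map ofReal) = 0 ∧ η ≠ 0 := by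
    simpa [rank_eq_card_iff_forall_vecMul_eq_zero] using hz
  rw [vecMul_sub, vecMul_smul, sub_eq_zero] at hη
  obtain ⟨hp, hq⟩ := vecMul_re_im_of_vecMul_map_ofReal_eq_smul hη
  set p : n → ℝ := fun i => (η i).re
  set q : n → ℝ := fun i => (η i).im
  by_cases hpq : LinearIndependent ℝ ![p, q]
  · obtain ⟨A, B, hAB, hrank⟩ := exists_consistent_rank_fromCols_ne hdata hpq
      (of_pair_mul_eq_rotation_mul hp hq) (by simp) (vecMul_map_ofReal_rotation z.re z.im)
    exact ⟨A, B, hAB, _, hrank⟩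
  · have h0 : ¬(p = 0 ∧ q = 0) := fun ⟨hp0, hq0⟩ =>
      hη0 (funext fun i => Complex.ext (congrFun hp0 i) (congrFun hq0 i))
    obtain ⟨w, hw0, hw⟩ := exists_vecMul_eq_smul_of_not_linearIndependent_pair hpq h0 hp hq
    obtain ⟨A, B, hAB, hrank⟩ := exists_consistent_rank_fromCols_ne hdata (W := of ![w])
      (J := !![z.re]) (ξ := ![1]) (linearIndependent_unique_iff.mpr hw0) (by simp [hw, smul_vecMul])
      (by simp) (z := z.re) (by ext i; fin_cases i; simp [vecMul, dotProduct])
    exact ⟨A, B, hAB, _, hrank⟩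

end RealData

/-- Data-driven Hautus test for controllability: assuming the data are generated by
some system, rank(X₊ - λX₋) = n for all λ ∈ ℂ iff every system (A,B) consistent
with the data is controllable (Hautus test). -/
theorem informativity_for_controllability
    (n m T : ℕ)
    (Xm Xp : Matrix (Fin n) (Fin T) ℝ) (Um : Matrix (Fin m) (Fin T) ℝ)
    (As : Matrix (Fin n) (Fin n) ℝ) (Bs : Matrix (Fin n) (Fin m) ℝ)
    (hdata : Xp = As * Xm + Bs * Um) :
    (∀ z : ℂ, (Xp.map Complex.ofReal - z • Xm.map Complex.ofReal).rank = n)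
    ↔ (∀ (A : Matrix (Fin n) (Fin n) ℝ) (B : Matrix (Fin n) (Fin m) ℝ),
        Xp = A * Xm + B * Um →
        ∀ z : ℂ,
          (Matrix.fromCols
            (A.map Complex.ofReal - z • (1 : Matrix (Fin n) (Fin n) ℂ))
            (B.map Complex.ofReal)).rank = n) := by
  constructor
  · intro h A B hAB z
    have hABℂ : Xp.map ofReal = A.map ofReal * Xm.map ofReal + B.map ofReal * Um.map ofReal := by
      simpa [Matrix.map_add, map_ofReal_mul] using congrArg (·.map ofReal) hAB
    refine le_antisymm ((rank_le_card_height _).trans_eq (Fintype.card_fin n)) ?_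
    calc n = _ := (h z).symm
      _ ≤ _ := rank_sub_smul_le_rank_fromCols hABℂ z
  · intro hctrl z
    by_contra hz
    obtain ⟨A, B, hAB, z', hz'⟩ :=
      exists_consistent_rank_fromCols_ne_of_rank_ne hdata (z := z) (by simpa using hz)
    exact hz' (by simpa using hctrl A B hAB z')
end

section
/- If rank(X_+) = n and rank(X_+ - λ X_-) = n for all nonzero λ ∈ ℂ with λ^{-1} an eigenvalue of X_- X_+^♯ (where X_+^♯ is any right inverse of X_+), then rank(X_+ - λ X_-) = n for all λ ∈ ℂ. -/
lemma map_ofReal_mul_s3 {a b c : ℕ} (A : Matrix (Fin a) (Fin b) ℝ) (B : Matrix (Fin b) (Fin c) ℝ) :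
    (A * B).map Complex.ofReal = A.map Complex.ofReal * B.map Complex.ofReal := by
  ext i j
  simp [Matrix.mul_apply]

lemma rank_of_right_inverse {n T : ℕ} (M : Matrix (Fin n) (Fin T) ℂ)
    (N : Matrix (Fin T) (Fin n) ℂ) (hMN : M * N = 1) : M.rank = n := by
  have h1 : (M * N).rank = n := by
    rw [hMN, Matrix.rank_one, Fintype.card_fin]
  have h2 : (M * N).rank ≤ M.rank := Matrix.rank_mul_le_left M N
  have h3 : M.rank ≤ n := by
    simpa using M.rank_le_card_height
  omega

/-- The infinite Hautus-type rank test on the data can be verified in finitely many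
steps: if rank X₊ = n and rank(X₊ - λX₋) = n for all nonzero λ with λ⁻¹ an
eigenvalue of X₋X₊♯ (X₊♯ a right inverse of X₊), then rank(X₊ - λX₋) = n for all λ. -/
theorem finite_rank_test_controllability
    (n T : ℕ) (hT : n ≤ T)
    (Xm Xp : Matrix (Fin n) (Fin T) ℝ)
    (Xpd : Matrix (Fin T) (Fin n) ℝ) (hXpd : Xp * Xpd = 1)
    (hrank : Xp.rank = n)
    (h : ∀ z : ℂ, z ≠ 0 →
      z⁻¹ ∈ spectrum ℂ ((Xm * Xpd).map Complex.ofReal) →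
      (Xp.map Complex.ofReal - z • Xm.map Complex.ofReal).rank = n) :
    ∀ z : ℂ, (Xp.map Complex.ofReal - z • Xm.map Complex.ofReal).rank = n := by
  intro z
  set A : Matrix (Fin n) (Fin n) ℂ := (Xm * Xpd).map Complex.ofReal with hA
  by_cases hmem : z ≠ 0 ∧ z⁻¹ ∈ spectrum ℂ A
  · exact h z hmem.1 hmem.2
  · -- In this case 1 - z • A is a unit.
    have hu : IsUnit (1 - z • A) := by
      by_cases hz : z = 0
      · simp [hz]
      · have hns : z⁻¹ ∉ spectrum ℂ A := fun hc => hmem ⟨hz, hc⟩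
        have hu' : IsUnit (algebraMap ℂ (Matrix (Fin n) (Fin n) ℂ) z⁻¹ - A) := by
          simpa [spectrum.mem_iff] using hns
        have : (1 : Matrix (Fin n) (Fin n) ℂ) - z • A
            = z • (algebraMap ℂ (Matrix (Fin n) (Fin n) ℂ) z⁻¹ - A) := by
          rw [smul_sub, Algebra.algebraMap_eq_smul_one, smul_smul,
            mul_inv_cancel₀ hz, one_smul]
        rw [this]
        exact (IsUnit.smul (Units.mk0 z hz) hu')
    obtain ⟨u, hu'⟩ := hu
    have key : (Xp.map Complex.ofReal - z • Xm.map Complex.ofReal)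
        * (Xpd.map Complex.ofReal * (↑u⁻¹ : Matrix (Fin n) (Fin n) ℂ)) = 1 := by
      have hmap : Xp.map Complex.ofReal * Xpd.map Complex.ofReal = 1 := by
        have := congrArg (Matrix.map · (Complex.ofReal)) hXpd
        simpa [map_ofReal_mul_s3] using this
      have hmapA : Xm.map Complex.ofReal * Xpd.map Complex.ofReal = A := by
        rw [hA, map_ofReal_mul_s3]
      calc (Xp.map Complex.ofReal - z • Xm.map Complex.ofReal)
            * (Xpd.map Complex.ofReal * (↑u⁻¹ : Matrix (Fin n) (Fin n) ℂ))
          = ((Xp.map Complex.ofReal - z • Xm.map Complex.ofReal)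
              * Xpd.map Complex.ofReal) * (↑u⁻¹ : Matrix (Fin n) (Fin n) ℂ) := by
            rw [Matrix.mul_assoc]
        _ = (1 - z • A) * (↑u⁻¹ : Matrix (Fin n) (Fin n) ℂ) := by
            rw [Matrix.sub_mul, Matrix.smul_mul, hmap, hmapA]
        _ = 1 := by rw [← hu']; exact u.mul_inv
    exact rank_of_right_inverse _ _ key
end

section
/- Let K ∈ ℝ^{m×n} be such that A + B K is Schur stable (spectral radius < 1) for all (A,B) with X_+ = A X_- + B U_-, where this solution set is nonempty. Then A_0 + B_0 K = 0 for every (A_0,B_0) with A_0 X_- + B_0 U_- = 0; equivalently, the column space of [I; K] is contained in the column space of [X_-; U_-]. -/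
/-!
Perturbing a consistent pair `(A, B)` by `E (A₀, B₀)`, where `A₀ X₋ + B₀ U₋ = 0`, keeps it
consistent, so `A + B K + E (A₀ + B₀ K)` is Schur stable for every `E`. A Schur stable
`n × n` matrix has trace of modulus at most `n` (the trace is the sum of the eigenvalues),
while `E ↦ tr (E (A₀ + B₀ K))` is a linear form that vanishes identically only if
`A₀ + B₀ K = 0`. The column-space inclusion is the dual statement: every left annihilator of
`[X₋; U₋]` annihilates `[I; K]`.
-/

/-- A real square matrix is Schur stable if all its complex eigenvalues have modulus
strictly less than one. -/
def SchurStable {n : ℕ} (M : Matrix (Fin n) (Fin n) ℝ) : Prop :=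
  ∀ z ∈ spectrum ℂ (M.map Complex.ofReal), ‖z‖ < 1

open Matrix

theorem Matrix.range_mulVecLin_le_of_mul_eq_zero {K ι κ ν : Type*} [Field K] [Fintype ι]
    [DecidableEq ι] [Fintype κ] [Fintype ν] {W : Matrix ι κ K} {G : Matrix ι ν K}
    (h : ∀ C : Matrix ν ι K, C * W = 0 → C * G = 0) :
    LinearMap.range G.mulVecLin ≤ LinearMap.range W.mulVecLin := by
  rintro _ ⟨x, rfl⟩
  by_contra hx
  obtain ⟨f, hfx, hfW⟩ := Submodule.exists_dual_map_eq_bot_of_notMem hx inferInstance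
  set y := (dotProductEquiv K ι).symm f
  have hf : ∀ u, f u = y ⬝ᵥ u := fun u => by
    rw [← dotProductEquiv_apply_apply, LinearEquiv.apply_symm_apply]
  have hyW : y ᵥ* W = 0 := dotProduct_eq_zero _ fun w => by
    rw [← dotProduct_mulVec, ← hf]
    exact (Submodule.mem_bot K).mp (hfW ▸ Submodule.mem_map_of_mem ⟨w, rfl⟩)
  have hyG : y ᵥ* G = 0 := by
    have hC := h (vecMulVec 1 y) (by rw [vecMulVec_mul, hyW]; ext; simp [vecMulVec_apply])
    rw [vecMulVec_mul] at hC
    funext j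
    simpa [vecMulVec_apply] using congr_fun (congr_fun hC j) j
  exact hfx (by rw [hf, mulVecLin_apply, dotProduct_mulVec, hyG, zero_dotProduct])

theorem SchurStable.abs_trace_le {n : ℕ} {M : Matrix (Fin n) (Fin n) ℝ} (h : SchurStable M) :
    |M.trace| ≤ n := by
  set Mc := M.map Complex.ofReal
  have hroots : ∀ x ∈ Mc.charpoly.roots.map norm, x ≤ 1 := by
    simp only [Multiset.mem_map, forall_exists_index, and_imp]
    rintro _ z hz rfl
    exact (h z (mem_spectrum_of_isRoot_charpoly (Polynomial.isRoot_of_mem_roots hz))).le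
  have hcard : Multiset.card Mc.charpoly.roots ≤ n := by
    simpa [Mc.charpoly_natDegree_eq_dim] using Polynomial.card_roots' Mc.charpoly
  have htrace : Mc.trace = M.trace := by simp [Mc, trace, diag]
  calc |M.trace| = ‖Mc.trace‖ := by rw [htrace, Complex.norm_real, Real.norm_eq_abs]
    _ = ‖Mc.charpoly.roots.sum‖ := by rw [trace_eq_sum_roots_charpoly]
    _ ≤ (Mc.charpoly.roots.map norm).sum := norm_multiset_sum_le _
    _ ≤ Multiset.card (Mc.charpoly.roots.map norm) • (1 : ℝ) :=
        Multiset.sum_le_card_nsmul _ _ hroots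
    _ ≤ n := by simpa using (Nat.cast_le.mpr hcard : (_ : ℝ) ≤ n)

theorem eq_zero_of_forall_abs_add_mul_le {a b c : ℝ} (h : ∀ t, |a + t * c| ≤ b) : c = 0 := by
  by_contra hc
  have := (le_abs_self _).trans (h ((|a| + b + 1) / c))
  rw [div_mul_cancel₀ _ hc] at this
  linarith [neg_abs_le a]

theorem eq_zero_of_forall_schurStable_add_mul {n : ℕ} {M N : Matrix (Fin n) (Fin n) ℝ}
    (h : ∀ E, SchurStable (M + E * N)) : N = 0 := by
  rw [ext_iff_trace_mul_left]
  intro E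
  rw [Matrix.mul_zero, trace_zero]
  refine eq_zero_of_forall_abs_add_mul_le (a := M.trace) (b := n) fun t => ?_
  simpa [trace_add, trace_smul, smul_mul_assoc] using (h (t • E)).abs_trace_le

/-- If K stabilizes every system consistent with the data, then A₀ + B₀K = 0 for
every (A₀,B₀) in the homogeneous solution set; equivalently the column space of
[I; K] is contained in that of [X₋; U₋]. -/
theorem necessary_condition_stabilization
    (n m T : ℕ)
    (Xm Xp : Matrix (Fin n) (Fin T) ℝ) (Um : Matrix (Fin m) (Fin T) ℝ)
    (K : Matrix (Fin m) (Fin n) ℝ)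
    (hne : ∃ (A : Matrix (Fin n) (Fin n) ℝ) (B : Matrix (Fin n) (Fin m) ℝ),
      Xp = A * Xm + B * Um)
    (hK : ∀ (A : Matrix (Fin n) (Fin n) ℝ) (B : Matrix (Fin n) (Fin m) ℝ),
      Xp = A * Xm + B * Um → SchurStable (A + B * K)) :
    (∀ (A0 : Matrix (Fin n) (Fin n) ℝ) (B0 : Matrix (Fin n) (Fin m) ℝ),
      A0 * Xm + B0 * Um = 0 → A0 + B0 * K = 0)
    ∧ LinearMap.range (Matrix.fromRows (1 : Matrix (Fin n) (Fin n) ℝ) K).mulVecLin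
      ≤ LinearMap.range (Matrix.fromRows Xm Um).mulVecLin := by
  obtain ⟨A, B, hAB⟩ := hne
  have hzero : ∀ (A0 : Matrix (Fin n) (Fin n) ℝ) (B0 : Matrix (Fin n) (Fin m) ℝ),
      A0 * Xm + B0 * Um = 0 → A0 + B0 * K = 0 := by
    intro A0 B0 h0
    refine eq_zero_of_forall_schurStable_add_mul (M := A + B * K) fun E => ?_
    have hsol : Xp = (A + E * A0) * Xm + (B + E * B0) * Um := by
      calc Xp = A * Xm + B * Um + E * (A0 * Xm + B0 * Um) := by
            rw [h0, Matrix.mul_zero, add_zero, hAB]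
        _ = _ := by simp only [Matrix.add_mul, Matrix.mul_add, Matrix.mul_assoc]; abel
    convert hK _ _ hsol using 1
    simp only [Matrix.add_mul, Matrix.mul_add, Matrix.mul_assoc]; abel
  refine ⟨hzero, range_mulVecLin_le_of_mul_eq_zero fun C hC => ?_⟩
  rw [← fromCols_toCols C, fromCols_mul_fromRows] at hC ⊢
  simpa using hzero _ _ hC
end

section
/- There exists Θ ∈ ℝ^{T×n} with X_- Θ symmetric and the block matrix [[X_- Θ, X_+ Θ],[Θᵀ X_+ᵀ, X_- Θ]] positive definite if and only if X_- has full row rank and there exists a right inverse X_-^♯ of X_- with X_+ X_-^♯ Schur stable. In that case X_-^♯ := Θ (X_- Θ)^{-1} is such a right inverse and K := U_- Θ (X_- Θ)^{-1} satisfies X_+ X_-^♯ = (X_+Θ)(X_-Θ)^{-1}. -/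
/-!
With `P := X₋Θ` and `M := X₊ΘP⁻¹`, the data LMI is `[[P, MP], [(MP)ᵀ, P]] ≻ 0`, whose Schur
complement with respect to the corner `P ≻ 0` is the Lyapunov inequality `P - MPMᵀ ≻ 0`; moreover
`ΘP⁻¹` is a right inverse of `X₋`, which forces full row rank. Conversely, a right inverse `X₋♯`
with Lyapunov matrix `P` yields the feasible point `Θ := X₋♯P`, for which `X₋Θ = P` and
`X₊Θ = (X₊X₋♯)P`.
-/

open scoped Matrix

/-- Schur stability of a real matrix M via the discrete Lyapunov characterization:
there exists P ≻ 0 with P - M P Mᵀ ≻ 0. -/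
def SchurStableLyap {n : ℕ} (M : Matrix (Fin n) (Fin n) ℝ) : Prop :=
  ∃ P : Matrix (Fin n) (Fin n) ℝ, P.PosDef ∧ (P - M * P * Mᵀ).PosDef

open Matrix
open scoped ComplexOrder

/-- A positive semidefinite matrix is positive definite exactly when it is invertible, and both
properties pass to the Schur complement. -/
theorem Matrix.posDef_fromBlocks₂₂_iff {𝕜 m n : Type*} [RCLike 𝕜] [Fintype m] [Fintype n]
    [DecidableEq m] [DecidableEq n] (A : Matrix m m 𝕜) (B : Matrix m n 𝕜) {D : Matrix n n 𝕜}
    (hD : D.PosDef) :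
    (fromBlocks A B Bᴴ D).PosDef ↔ (A - B * D⁻¹ * Bᴴ).PosDef := by
  have := hD.isUnit.invertible
  have hSemidef := PosDef.fromBlocks₂₂ A B hD
  have hUnit : IsUnit (fromBlocks A B Bᴴ D) ↔ IsUnit (A - B * D⁻¹ * Bᴴ) := by
    rw [isUnit_fromBlocks_iff_of_invertible₂₂, invOf_eq_nonsing_inv]
  constructor
  · intro h
    exact (hSemidef.mp h.posSemidef).posDef_iff_isUnit.mpr (hUnit.mp h.isUnit)
  · intro h
    exact (hSemidef.mpr h.posSemidef).posDef_iff_isUnit.mpr (hUnit.mpr h.isUnit)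

theorem Matrix.posDef_fromBlocks_mul_iff {n : Type*} [Fintype n] [DecidableEq n]
    {P : Matrix n n ℝ} (M : Matrix n n ℝ) (hP : P.PosDef) :
    (fromBlocks P (M * P) (M * P)ᵀ P).PosDef ↔ (P - M * P * Mᵀ).PosDef := by
  have hPt : Pᵀ = P := by rw [← conjTranspose_eq_transpose_of_trivial, hP.isHermitian.eq]
  have hComplement : M * P * P⁻¹ * (M * P)ᵀ = M * P * Mᵀ := by
    rw [Matrix.mul_assoc M, mul_nonsing_inv _ ((isUnit_iff_isUnit_det _).mp hP.isUnit),
      Matrix.mul_one, transpose_mul, hPt, Matrix.mul_assoc]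
  rw [← conjTranspose_eq_transpose_of_trivial, posDef_fromBlocks₂₂_iff _ _ hP,
    conjTranspose_eq_transpose_of_trivial, hComplement]

theorem Matrix.rank_eq_card_of_mul_eq_one {m n R : Type*} [Fintype m] [Fintype n] [DecidableEq m]
    [CommSemiring R] [StrongRankCondition R] {A : Matrix m n R} {B : Matrix n m R} (h : A * B = 1) :
    A.rank = Fintype.card m := by
  refine le_antisymm A.rank_le_card_height ?_
  calc Fintype.card m = (A * B).rank := by rw [h, rank_one]
    _ ≤ A.rank := rank_mul_le_left A B

section DataDrivenLMI

variable {n : ℕ} {τ : Type*} [Fintype τ] {Xm Xp : Matrix (Fin n) τ ℝ}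

theorem rightInverse_schurStable_of_lmi {Θ : Matrix τ (Fin n) ℝ}
    (hpd : (fromBlocks (Xm * Θ) (Xp * Θ) (Θᵀ * Xpᵀ) (Xm * Θ)).PosDef) :
    Xm * (Θ * (Xm * Θ)⁻¹) = 1 ∧ SchurStableLyap (Xp * (Θ * (Xm * Θ)⁻¹)) := by
  set P := Xm * Θ
  have hP : P.PosDef := hpd.submatrix Sum.inr_injective
  have hdet : IsUnit P.det := (isUnit_iff_isUnit_det _).mp hP.isUnit
  have hXpΘ : Xp * (Θ * P⁻¹) * P = Xp * Θ := by
    rw [Matrix.mul_assoc, Matrix.mul_assoc, nonsing_inv_mul _ hdet, Matrix.mul_one]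
  refine ⟨by rw [← Matrix.mul_assoc, mul_nonsing_inv _ hdet], P, hP, ?_⟩
  rwa [← posDef_fromBlocks_mul_iff _ hP, hXpΘ, transpose_mul]

theorem lmi_of_rightInverse_schurStable {Xs : Matrix τ (Fin n) ℝ} (hXs : Xm * Xs = 1)
    (hstable : SchurStableLyap (Xp * Xs)) :
    ∃ Θ : Matrix τ (Fin n) ℝ, (Xm * Θ)ᵀ = Xm * Θ ∧
      (fromBlocks (Xm * Θ) (Xp * Θ) (Θᵀ * Xpᵀ) (Xm * Θ)).PosDef := by
  obtain ⟨P, hP, hLyap⟩ := hstable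
  have hXmΘ : Xm * (Xs * P) = P := by rw [← Matrix.mul_assoc, hXs, Matrix.one_mul]
  refine ⟨Xs * P, ?_, ?_⟩
  · rw [hXmΘ, ← conjTranspose_eq_transpose_of_trivial, hP.isHermitian.eq]
  · rwa [hXmΘ, ← transpose_mul, ← Matrix.mul_assoc, posDef_fromBlocks_mul_iff _ hP]

end DataDrivenLMI

theorem lmi_conditions_for_stabilization_general
    (n T : ℕ)
    (Xm Xp : Matrix (Fin n) (Fin T) ℝ) :
    ((∃ Θ : Matrix (Fin T) (Fin n) ℝ,
        (Xm * Θ)ᵀ = Xm * Θ ∧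
        (Matrix.fromBlocks (Xm * Θ) (Xp * Θ) (Θᵀ * Xpᵀ) (Xm * Θ)).PosDef)
      ↔ (Xm.rank = n ∧ ∃ Xs : Matrix (Fin T) (Fin n) ℝ,
          Xm * Xs = 1 ∧ SchurStableLyap (Xp * Xs)))
    ∧ (∀ Θ : Matrix (Fin T) (Fin n) ℝ,
        (Xm * Θ)ᵀ = Xm * Θ →
        (Matrix.fromBlocks (Xm * Θ) (Xp * Θ) (Θᵀ * Xpᵀ) (Xm * Θ)).PosDef →
        Xm * (Θ * (Xm * Θ)⁻¹) = 1 ∧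
        SchurStableLyap (Xp * (Θ * (Xm * Θ)⁻¹)) ∧
        Xp * (Θ * (Xm * Θ)⁻¹) = (Xp * Θ) * (Xm * Θ)⁻¹) := by
  refine ⟨⟨?_, ?_⟩, fun Θ _ hpd => ?_⟩
  · rintro ⟨Θ, -, hpd⟩
    obtain ⟨hright, hstable⟩ := rightInverse_schurStable_of_lmi hpd
    exact ⟨by rw [rank_eq_card_of_mul_eq_one hright, Fintype.card_fin], _, hright, hstable⟩
  · rintro ⟨-, Xs, hXs, hstable⟩
    exact lmi_of_rightInverse_schurStable hXs hstable
  · obtain ⟨hright, hstable⟩ := rightInverse_schurStable_of_lmi hpd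
    exact ⟨hright, hstable, (Matrix.mul_assoc _ _ _).symm⟩

/-- LMI conditions for data-driven stabilization: feasibility of the data-based LMI
in Θ is equivalent to X₋ having full row rank together with the existence of a
right inverse X₋♯ of X₋ with X₊X₋♯ Schur stable; in that case X₋♯ := Θ(X₋Θ)⁻¹ is
such a right inverse and X₊X₋♯ = (X₊Θ)(X₋Θ)⁻¹. -/
theorem lmi_conditions_for_stabilization
    (n m T : ℕ)
    (Xm Xp : Matrix (Fin n) (Fin T) ℝ) (Um : Matrix (Fin m) (Fin T) ℝ) :
    ((∃ Θ : Matrix (Fin T) (Fin n) ℝ,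
        (Xm * Θ)ᵀ = Xm * Θ ∧
        (Matrix.fromBlocks (Xm * Θ) (Xp * Θ) (Θᵀ * Xpᵀ) (Xm * Θ)).PosDef)
      ↔ (Xm.rank = n ∧ ∃ Xs : Matrix (Fin T) (Fin n) ℝ,
          Xm * Xs = 1 ∧ SchurStableLyap (Xp * Xs)))
    ∧ (∀ Θ : Matrix (Fin T) (Fin n) ℝ,
        (Xm * Θ)ᵀ = Xm * Θ →
        (Matrix.fromBlocks (Xm * Θ) (Xp * Θ) (Θᵀ * Xpᵀ) (Xm * Θ)).PosDef →
        Xm * (Θ * (Xm * Θ)⁻¹) = 1 ∧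
        SchurStableLyap (Xp * (Θ * (Xm * Θ)⁻¹)) ∧
        Xp * (Θ * (Xm * Θ)⁻¹) = (Xp * Θ) * (Xm * Θ)⁻¹) :=
  lmi_conditions_for_stabilization_general n T Xm Xp
end

section
/- A square real matrix M ∈ ℝ^{n×n} has spectral radius strictly less than 1 if and only if there exists a symmetric positive definite P ∈ ℝ^{n×n} with P - M P Mᵀ positive definite. -/
/-!
If every eigenvalue of `M` lies in the open unit disc, Gelfand's formula gives `‖Mᵏ‖ ≤ rᵏ`
eventually for some `r < 1`, so `P = ∑ₖ Mᵏ (Mᵏ)ᵀ` converges. It is positive semidefinite as a limit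
of such matrices and satisfies `P = 1 + M P Mᵀ`, so both `P` and `P - M P Mᵀ = 1` are positive
definite. Conversely, if `v` is a complex left eigenvector of `M` with eigenvalue `z`, then
`v* (P - M P Mᵀ) v = (1 - |z|²) v* P v`, and both quadratic forms have positive real part.
-/

open Filter Matrix
open scoped NNReal ENNReal

section BanachAlgebra

variable {A : Type*} [NormedRing A] [NormedAlgebra ℂ A] [CompleteSpace A]

theorem spectrum.spectralRadius_lt_of_forall_norm_lt (a : A) {r : ℝ≥0} (hr : 0 < r)
    (h : ∀ z ∈ spectrum ℂ a, ‖z‖ < r) : spectralRadius ℂ a < r := by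
  cases subsingleton_or_nontrivial A
  · simpa [SpectralRadius.of_subsingleton] using hr
  · exact spectrum.spectralRadius_lt_of_forall_lt a fun z hz => h z hz

theorem spectrum.eventually_norm_pow_le_of_spectralRadius_lt (a : A) {r : ℝ≥0}
    (h : spectralRadius ℂ a < r) : ∀ᶠ k : ℕ in atTop, ‖a ^ k‖ ≤ r ^ k := by
  filter_upwards [(pow_norm_pow_one_div_tendsto_nhds_spectralRadius a).eventually_lt_const h,
    eventually_gt_atTop 0] with k hk hk0
  rw [ENNReal.ofReal_lt_iff_lt_toReal (by positivity) ENNReal.coe_ne_top, one_div,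
    Real.rpow_inv_lt_iff_of_pos (norm_nonneg _) (by positivity) (by positivity),
    Real.rpow_natCast] at hk
  exact_mod_cast hk.le

end BanachAlgebra

namespace Matrix

variable {ι : Type*} [Fintype ι]

section PosSemidef

variable {R : Type*} [Ring R] [PartialOrder R] [StarRing R] [TopologicalSpace R]
  [IsTopologicalRing R] [ContinuousStar R] [OrderClosedTopology R]

theorem isClosed_setOf_posSemidef : IsClosed {A : Matrix ι ι R | A.PosSemidef} := by
  simp only [posSemidef_iff_dotProduct_mulVec, Set.ofPred_and, Set.ofPred_forall]
  exact (isClosed_eq (by fun_prop) continuous_id).inter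
    (isClosed_iInter fun x => isClosed_le continuous_const (by fun_prop))

theorem posSemidef_tsum [AddLeftMono R] {κ : Type*} {f : κ → Matrix ι ι R}
    (hf : ∀ k, (f k).PosSemidef) : (∑' k, f k).PosSemidef := by
  by_cases hs : Summable f
  · exact isClosed_setOf_posSemidef.mem_of_tendsto hs.hasSum
      (Eventually.of_forall fun s => posSemidef_sum s fun k _ => hf k)
  · simpa [tsum_eq_zero_of_not_summable hs] using PosSemidef.zero

end PosSemidef

theorem star_dotProduct_mul_mul_conjTranspose_mulVec {R : Type*} [CommRing R] [StarRing R]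
    {A B : Matrix ι ι R} {v : ι → R} {z : R} (hv : Aᴴ *ᵥ v = z • v) :
    star v ⬝ᵥ (A * B * Aᴴ) *ᵥ v = star z * z * (star v ⬝ᵥ B *ᵥ v) := by
  rw [← mulVec_mulVec, ← mulVec_mulVec, hv, dotProduct_mulVec, ← conjTranspose_conjTranspose A,
    ← star_mulVec, hv]
  simp [mulVec_smul, star_smul, mul_assoc, mul_comm]

theorem re_star_dotProduct_map_ofReal_mulVec (P : Matrix ι ι ℝ) (v : ι → ℂ) :
    (star v ⬝ᵥ P.map Complex.ofReal *ᵥ v).re =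
      (fun i => (v i).re) ⬝ᵥ P *ᵥ (fun i => (v i).re) +
        (fun i => (v i).im) ⬝ᵥ P *ᵥ (fun i => (v i).im) := by
  simp only [dotProduct, mulVec, Finset.mul_sum, Complex.re_sum, ← Finset.sum_add_distrib]
  refine Finset.sum_congr rfl fun i _ => Finset.sum_congr rfl fun j _ => ?_
  simp

theorem PosDef.re_star_dotProduct_map_ofReal_mulVec_pos {P : Matrix ι ι ℝ} (hP : P.PosDef)
    {v : ι → ℂ} (hv : v ≠ 0) : 0 < (star v ⬝ᵥ P.map Complex.ofReal *ᵥ v).re := by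
  rw [re_star_dotProduct_map_ofReal_mulVec]
  have hnonneg (w : ι → ℝ) : 0 ≤ w ⬝ᵥ P *ᵥ w := by
    simpa using hP.posSemidef.dotProduct_mulVec_nonneg w
  have hpos {w : ι → ℝ} (hw : w ≠ 0) : 0 < w ⬝ᵥ P *ᵥ w := by
    simpa using hP.dotProduct_mulVec_pos hw
  obtain hre | him : (fun i => (v i).re) ≠ 0 ∨ (fun i => (v i).im) ≠ 0 := by
    by_contra! h
    exact hv (funext fun i => Complex.ext (congrFun h.1 i) (congrFun h.2 i))
  · exact add_pos_of_pos_of_nonneg (hpos hre) (hnonneg _)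
  · exact add_pos_of_nonneg_of_pos (hnonneg _) (hpos him)

variable [DecidableEq ι]

theorem tsum_pow_mul_transpose_pow_eq {R : Type*} [CommRing R] [TopologicalSpace R]
    [IsTopologicalRing R] [T2Space R] {M : Matrix ι ι R}
    (hM : Summable fun k => M ^ k * (M ^ k)ᵀ) :
    ∑' k, M ^ k * (M ^ k)ᵀ = 1 + M * (∑' k, M ^ k * (M ^ k)ᵀ) * Mᵀ := by
  conv_lhs => rw [hM.tsum_eq_zero_add]
  rw [← hM.tsum_mul_left, ← (hM.mul_left M).tsum_mul_right]
  simp [pow_succ', transpose_mul, mul_assoc]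

section Frobenius

-- The Frobenius norm is invariant under transposition and under entrywise `Complex.ofReal`.
attribute [local instance] frobeniusNormedRing frobeniusNormedAlgebra

theorem summable_pow_mul_transpose_pow {M : Matrix ι ι ℝ}
    (h : ∀ z ∈ spectrum ℂ (M.map Complex.ofReal), ‖z‖ < 1) :
    Summable fun k => M ^ k * (M ^ k)ᵀ := by
  obtain ⟨r, hρr, hr⟩ := exists_between
    (spectrum.spectralRadius_lt_of_forall_norm_lt _ one_pos (by simpa using h))
  lift r to ℝ≥0 using hr.ne_top
  have hr1 : (r : ℝ) < 1 := by exact_mod_cast hr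
  have hnorm (k : ℕ) : ‖M ^ k‖ = ‖(M.map Complex.ofReal) ^ k‖ := by
    rw [← frobenius_norm_map_eq (M ^ k) Complex.ofReal Complex.norm_real]
    exact congrArg norm (map_pow Complex.ofRealHom.mapMatrix M k)
  refine .of_norm_bounded_eventually_nat (g := fun k => ((r : ℝ) ^ 2) ^ k)
    (summable_geometric_of_lt_one (by positivity) (by nlinarith [r.2])) ?_
  filter_upwards [spectrum.eventually_norm_pow_le_of_spectralRadius_lt _ hρr] with k hk
  calc ‖M ^ k * (M ^ k)ᵀ‖ ≤ ‖M ^ k‖ * ‖M ^ k‖ := by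
        grw [norm_mul_le, frobenius_norm_transpose]
    _ ≤ r ^ k * r ^ k := by rw [hnorm]; gcongr
    _ = ((r : ℝ) ^ 2) ^ k := by ring

end Frobenius

theorem exists_transpose_mulVec_eq_smul_of_mem_spectrum {K : Type*} [Field K]
    {A : Matrix ι ι K} {z : K} (hz : z ∈ spectrum K A) : ∃ v ≠ 0, Aᵀ *ᵥ v = z • v := by
  rw [mem_spectrum_iff_isRoot_charpoly, ← charpoly_transpose, ← mem_spectrum_iff_isRoot_charpoly,
    ← spectrum_toLin', ← Module.End.hasEigenvalue_iff_mem_spectrum] at hz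
  obtain ⟨v, hv, hv0⟩ := hz.exists_hasEigenvector
  exact ⟨v, hv0, by simpa using Module.End.mem_eigenspace_iff.mp hv⟩

theorem norm_lt_one_of_mem_spectrum_of_posDef {M P : Matrix ι ι ℝ} (hP : P.PosDef)
    (hQ : (P - M * P * Mᵀ).PosDef) {z : ℂ} (hz : z ∈ spectrum ℂ (M.map Complex.ofReal)) :
    ‖z‖ < 1 := by
  set Mc := M.map Complex.ofReal
  obtain ⟨v, hv0, hv⟩ := exists_transpose_mulVec_eq_smul_of_mem_spectrum hz
  have hMc : Mcᴴ = Mcᵀ := by ext; simp [Mc]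
  have hQc : (P - M * P * Mᵀ).map Complex.ofReal =
      P.map Complex.ofReal - Mc * P.map Complex.ofReal * Mcᴴ := by
    rw [hMc]
    ext i j
    simp [Mc, Matrix.mul_apply]
  have key : (star v ⬝ᵥ (P - M * P * Mᵀ).map Complex.ofReal *ᵥ v).re =
      (1 - ‖z‖ ^ 2) * (star v ⬝ᵥ P.map Complex.ofReal *ᵥ v).re := by
    rw [hQc, sub_mulVec, dotProduct_sub, star_dotProduct_mul_mul_conjTranspose_mulVec (hMc ▸ hv),
      Complex.star_def, Complex.conj_mul']
    simp [← Complex.ofReal_pow, sub_mul]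
  have hQv := hQ.re_star_dotProduct_map_ofReal_mulVec_pos hv0
  rw [key] at hQv
  have := pos_of_mul_pos_left hQv (hP.re_star_dotProduct_map_ofReal_mulVec_pos hv0).le
  exact (sq_lt_one_iff₀ (norm_nonneg z)).mp (by linarith)

end Matrix

/-- Discrete-time Lyapunov theorem: a real square matrix M has spectral radius < 1
iff there is a symmetric positive definite P with P - M P Mᵀ positive definite. -/
theorem discrete_lyapunov
    (n : ℕ) (M : Matrix (Fin n) (Fin n) ℝ) :
    (∀ z ∈ spectrum ℂ (M.map Complex.ofReal), ‖z‖ < 1)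
    ↔ ∃ P : Matrix (Fin n) (Fin n) ℝ, P.PosDef ∧ (P - M * P * Mᵀ).PosDef := by
  constructor
  · intro h
    set P := ∑' k, M ^ k * (M ^ k)ᵀ
    have hP : P = 1 + M * P * Mᵀ :=
      tsum_pow_mul_transpose_pow_eq (summable_pow_mul_transpose_pow h)
    have hPsd : P.PosSemidef :=
      posSemidef_tsum fun k => by simpa using posSemidef_self_mul_conjTranspose (M ^ k)
    refine ⟨P, ?_, by rw [sub_eq_of_eq_add hP]; exact PosDef.one⟩
    rw [hP]
    exact PosDef.one.add_posSemidef (by simpa using hPsd.mul_mul_conjTranspose_same M)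
  · rintro ⟨P, hP, hQ⟩ z hz
    exact norm_lt_one_of_mem_spectrum_of_posDef hP hQ hz
end

section
/- Let Π ∈ S^{q+r} be a symmetric real matrix partitioned with blocks Π_{11} ∈ S^q, Π_{12} ∈ ℝ^{q×r}, Π_{22} ∈ S^r, with Π_{22} ≤ 0 (negative semidefinite) and ker Π_{22} ⊆ ker Π_{12}. Then the set Z_r(Π) = { Z ∈ ℝ^{r×q} : [I; Z]ᵀ Π [I; Z] ≥ 0 } is nonempty if and only if the generalized Schur complement Π_{11} - Π_{12} Π_{22}† Π_{21} is positive semidefinite. -/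
open scoped Matrix

section aux
variable {q r : ℕ}

lemma qmi_G_symm (P22 G : Matrix (Fin r) (Fin r) ℝ) (h22 : P22ᵀ = P22)
    (hG1 : P22 * G * P22 = P22) (hG2 : G * P22 * G = G)
    (hG3 : (P22 * G)ᵀ = P22 * G) (hG4 : (G * P22)ᵀ = G * P22) : Gᵀ = G := by
  have s1 : P22 * Gᵀ = G * P22 := by
    have := congrArg Matrix.transpose hG4
    simpa [Matrix.transpose_mul, h22] using this.symm
  have s2 : Gᵀ * P22 = P22 * G := by
    have := congrArg Matrix.transpose hG3
    simpa [Matrix.transpose_mul, h22] using this.symm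
  have hH1 : P22 * (Gᵀ * P22) = P22 := by
    have := congrArg Matrix.transpose hG1
    simpa [Matrix.transpose_mul, h22, Matrix.mul_assoc] using this
  have t1 : P22 * G = G * P22 := by
    calc P22 * G = (P22 * (Gᵀ * P22)) * G := by rw [hH1]
      _ = (P22 * Gᵀ) * (P22 * G) := by simp [Matrix.mul_assoc]
      _ = (G * P22) * (Gᵀ * P22) := by rw [s1, ← s2]
      _ = G * (P22 * (Gᵀ * P22)) := by simp [Matrix.mul_assoc]
      _ = G * P22 := by rw [hH1]
  have hH2 : Gᵀ * P22 * Gᵀ = Gᵀ := by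
    have := congrArg Matrix.transpose hG2
    simpa [Matrix.transpose_mul, h22, Matrix.mul_assoc] using this
  calc Gᵀ = Gᵀ * P22 * Gᵀ := hH2.symm
    _ = (P22 * G) * Gᵀ := by rw [s2]
    _ = (G * P22) * Gᵀ := by rw [t1]
    _ = G * (P22 * Gᵀ) := by rw [Matrix.mul_assoc]
    _ = G * (P22 * G) := by rw [s1, ← t1]
    _ = G := by rw [← Matrix.mul_assoc]; exact hG2

end aux

/-- Nonemptiness of the solution set of a QMI: for Π with Π₂₂ ⪯ 0 and
ker Π₂₂ ⊆ ker Π₁₂, the set Z_r(Π) = {Z : [I;Z]ᵀ Π [I;Z] ⪰ 0} is nonempty iff the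
generalized Schur complement Π₁₁ - Π₁₂ Π₂₂† Π₂₁ is positive semidefinite
(Π₂₂† the Moore–Penrose pseudoinverse). -/
theorem qmi_solution_set_nonempty
    (q r : ℕ)
    (P11 : Matrix (Fin q) (Fin q) ℝ) (P12 : Matrix (Fin q) (Fin r) ℝ)
    (P22 : Matrix (Fin r) (Fin r) ℝ)
    (h11 : P11ᵀ = P11) (h22 : P22ᵀ = P22)
    (hneg : (-P22).PosSemidef)
    (hker : ∀ x : Fin r → ℝ, P22.mulVec x = 0 → P12.mulVec x = 0)
    -- G is the Moore–Penrose pseudoinverse of Π₂₂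
    (G : Matrix (Fin r) (Fin r) ℝ)
    (hG1 : P22 * G * P22 = P22) (hG2 : G * P22 * G = G)
    (hG3 : (P22 * G)ᵀ = P22 * G) (hG4 : (G * P22)ᵀ = G * P22) :
    (∃ Z : Matrix (Fin r) (Fin q) ℝ,
      ((Matrix.fromRows (1 : Matrix (Fin q) (Fin q) ℝ) Z)ᵀ *
        Matrix.fromBlocks P11 P12 P12ᵀ P22 *
        Matrix.fromRows (1 : Matrix (Fin q) (Fin q) ℝ) Z).PosSemidef)
    ↔ (P11 - P12 * G * P12ᵀ).PosSemidef := by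
  have hGsym : Gᵀ = G := qmi_G_symm P22 G h22 hG1 hG2 hG3 hG4
  -- kernel condition in matrix form
  have hk : P12 * (G * P22) = P12 := by
    have hB : P22 * (1 - G * P22) = 0 := by
      rw [Matrix.mul_sub, Matrix.mul_one, ← Matrix.mul_assoc, hG1, sub_self]
    have hPB : P12 * (1 - G * P22) = 0 := by
      ext i j
      have hx : P22.mulVec (fun k => (1 - G * P22) k j) = 0 := by
        funext i'
        have : (P22 * (1 - G * P22)) i' j = 0 := by rw [hB]; simp
        simpa [Matrix.mul_apply, Matrix.mulVec, dotProduct] using this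
      have := congrFun (hker _ hx) i
      simpa [Matrix.mul_apply, Matrix.mulVec, dotProduct] using this
    have := sub_eq_zero.mp (by simpa [Matrix.mul_sub] using hPB)
    exact this.symm
  have hk2 : P22 * (G * P12ᵀ) = P12ᵀ := by
    have := congrArg Matrix.transpose hk
    simpa [Matrix.transpose_mul, h22, hGsym, Matrix.mul_assoc] using this
  -- key identity
  have key : ∀ Z : Matrix (Fin r) (Fin q) ℝ,
      (Matrix.fromRows (1 : Matrix (Fin q) (Fin q) ℝ) Z)ᵀ *
        Matrix.fromBlocks P11 P12 P12ᵀ P22 *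
        Matrix.fromRows (1 : Matrix (Fin q) (Fin q) ℝ) Z
      = (P11 - P12 * G * P12ᵀ) +
        (Z + G * P12ᵀ)ᵀ * P22 * (Z + G * P12ᵀ) := by
    intro Z
    rw [Matrix.transpose_fromRows, Matrix.mul_assoc, Matrix.fromBlocks_mul_fromRows,
      Matrix.fromCols_mul_fromRows]
    have hG2' : G * (P22 * G) = G := by rw [← Matrix.mul_assoc]; exact hG2
    have e1 : P12 * (G * (P22 * Z)) = P12 * Z := by
      rw [← Matrix.mul_assoc G P22 Z, ← Matrix.mul_assoc P12, hk]
    simp only [Matrix.transpose_add, Matrix.transpose_mul, Matrix.transpose_one,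
      Matrix.transpose_transpose, hGsym,
      Matrix.mul_add, Matrix.add_mul, Matrix.one_mul, Matrix.mul_one, Matrix.mul_assoc,
      hk2, hk, hG2', e1, sub_eq_add_neg]
    abel
  constructor
  · rintro ⟨Z, hZ⟩
    rw [key Z] at hZ
    have hconj : ((Z + G * P12ᵀ)ᵀ * (-P22) * (Z + G * P12ᵀ)).PosSemidef := by
      have := hneg.conjTranspose_mul_mul_same (Z + G * P12ᵀ)
      simpa [Matrix.conjTranspose_eq_transpose_of_trivial] using this
    have := hZ.add hconj
    have heq : (P11 - P12 * G * P12ᵀ) + (Z + G * P12ᵀ)ᵀ * P22 * (Z + G * P12ᵀ) +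
        (Z + G * P12ᵀ)ᵀ * (-P22) * (Z + G * P12ᵀ) = P11 - P12 * G * P12ᵀ := by
      simp [Matrix.mul_neg, Matrix.neg_mul]
    rwa [heq] at this
  · intro hS
    refine ⟨-(G * P12ᵀ), ?_⟩
    rw [key]
    simpa using hS
end

section
/- Let Π ∈ S^{q+r} with Π_{22} ≤ 0, ker Π_{22} ⊆ ker Π_{12} and Π_{11} - Π_{12} Π_{22}† Π_{21} ≥ 0. Then the set Z_r(Π) = { Z ∈ ℝ^{r×q} : [I; Z]ᵀ Π [I; Z] ≥ 0 } is convex. -/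
open scoped Matrix

namespace Matrix

variable {m n R : Type*} [Fintype n]

lemma transpose_fromRows_one_mul_fromBlocks_mul_fromRows_one [Fintype m] [DecidableEq m]
    [CommRing R] (P₁₁ : Matrix m m R) (P₁₂ : Matrix m n R) (P₂₁ : Matrix n m R)
    (P₂₂ : Matrix n n R) (Z : Matrix n m R) :
    (fromRows (1 : Matrix m m R) Z)ᵀ * fromBlocks P₁₁ P₁₂ P₂₁ P₂₂ *
      fromRows (1 : Matrix m m R) Z =
      P₁₁ + P₁₂ * Z + Zᵀ * P₂₁ + Zᵀ * P₂₂ * Z := by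
  rw [Matrix.mul_assoc, fromBlocks_mul_fromRows, transpose_fromRows, fromCols_mul_fromRows]
  simp only [Matrix.mul_one, Matrix.one_mul, transpose_one, Matrix.mul_add, Matrix.mul_assoc]
  abel

lemma transpose_mul_mul_convexComb [CommRing R] (P : Matrix n n R) (A B : Matrix n m R)
    {t s : R} (hts : t + s = 1) :
    (t • A + s • B)ᵀ * P * (t • A + s • B) =
      t • (Aᵀ * P * A) + s • (Bᵀ * P * B) - (t * s) • ((A - B)ᵀ * P * (A - B)) := by
  obtain rfl : s = 1 - t := by rw [← hts]; ring
  simp only [transpose_add, transpose_smul, transpose_sub, Matrix.add_mul, Matrix.mul_add,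
    Matrix.sub_mul, Matrix.mul_sub, Matrix.smul_mul, Matrix.mul_smul]
  module

theorem convex_setOf_posSemidef_transpose_fromRows_one_mul_fromBlocks_mul [Fintype m]
    [DecidableEq m] (P₁₁ : Matrix m m ℝ) (P₁₂ : Matrix m n ℝ) (P₂₁ : Matrix n m ℝ)
    {P₂₂ : Matrix n n ℝ} (hP₂₂ : (-P₂₂).PosSemidef) :
    Convex ℝ {Z : Matrix n m ℝ |
      ((fromRows (1 : Matrix m m ℝ) Z)ᵀ * fromBlocks P₁₁ P₁₂ P₂₁ P₂₂ *
        fromRows (1 : Matrix m m ℝ) Z).PosSemidef} := by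
  intro A hA B hB t s ht hs hts
  simp only [Set.mem_ofPred_eq, transpose_fromRows_one_mul_fromBlocks_mul_fromRows_one] at hA hB ⊢
  have hcurv : ((A - B)ᵀ * -P₂₂ * (A - B)).PosSemidef := by
    simpa using hP₂₂.conjTranspose_mul_mul_same (A - B)
  -- the affine part of `Z ↦ [I; Z]ᵀ Π [I; Z]` commutes with convex combinations, and its
  -- quadratic part `Zᵀ Π₂₂ Z` is matrix-concave because `Π₂₂ ⪯ 0`
  have hcomb : P₁₁ + P₁₂ * (t • A + s • B) + (t • A + s • B)ᵀ * P₂₁ +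
      (t • A + s • B)ᵀ * P₂₂ * (t • A + s • B) =
      t • (P₁₁ + P₁₂ * A + Aᵀ * P₂₁ + Aᵀ * P₂₂ * A) +
        s • (P₁₁ + P₁₂ * B + Bᵀ * P₂₁ + Bᵀ * P₂₂ * B) +
        (t * s) • ((A - B)ᵀ * -P₂₂ * (A - B)) := by
    rw [transpose_mul_mul_convexComb P₂₂ A B hts]
    obtain rfl : s = 1 - t := by rw [← hts]; ring
    simp only [transpose_add, transpose_smul, Matrix.add_mul, Matrix.mul_add, Matrix.smul_mul,
      Matrix.mul_smul, Matrix.mul_neg, Matrix.neg_mul, smul_add, smul_neg]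
    module
  rw [hcomb]
  exact ((hA.smul ht).add (hB.smul hs)).add (hcurv.smul (mul_nonneg ht hs))

end Matrix

theorem qmi_solution_set_convex_general
    (q r : ℕ)
    (P11 : Matrix (Fin q) (Fin q) ℝ) (P12 : Matrix (Fin q) (Fin r) ℝ)
    (P22 : Matrix (Fin r) (Fin r) ℝ)
    (hneg : (-P22).PosSemidef) :
    Convex ℝ {Z : Matrix (Fin r) (Fin q) ℝ |
      ((Matrix.fromRows (1 : Matrix (Fin q) (Fin q) ℝ) Z)ᵀ *
        Matrix.fromBlocks P11 P12 P12ᵀ P22 *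
        Matrix.fromRows (1 : Matrix (Fin q) (Fin q) ℝ) Z).PosSemidef} :=
  Matrix.convex_setOf_posSemidef_transpose_fromRows_one_mul_fromBlocks_mul P11 P12 P12ᵀ hneg

/-- Convexity of the solution set of a QMI: for Π with Π₂₂ ⪯ 0,
ker Π₂₂ ⊆ ker Π₁₂ and Π₁₁ - Π₁₂ Π₂₂† Π₂₁ ⪰ 0, the set
Z_r(Π) = {Z : [I;Z]ᵀ Π [I;Z] ⪰ 0} is convex. -/
theorem qmi_solution_set_convex
    (q r : ℕ)
    (P11 : Matrix (Fin q) (Fin q) ℝ) (P12 : Matrix (Fin q) (Fin r) ℝ)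
    (P22 : Matrix (Fin r) (Fin r) ℝ)
    (h11 : P11ᵀ = P11) (h22 : P22ᵀ = P22)
    (hneg : (-P22).PosSemidef)
    (hker : ∀ x : Fin r → ℝ, P22.mulVec x = 0 → P12.mulVec x = 0)
    -- G is the Moore–Penrose pseudoinverse of Π₂₂
    (G : Matrix (Fin r) (Fin r) ℝ)
    (hG1 : P22 * G * P22 = P22) (hG2 : G * P22 * G = G)
    (hG3 : (P22 * G)ᵀ = P22 * G) (hG4 : (G * P22)ᵀ = G * P22)
    (hSchur : (P11 - P12 * G * P12ᵀ).PosSemidef) :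
    Convex ℝ {Z : Matrix (Fin r) (Fin q) ℝ |
      ((Matrix.fromRows (1 : Matrix (Fin q) (Fin q) ℝ) Z)ᵀ *
        Matrix.fromBlocks P11 P12 P12ᵀ P22 *
        Matrix.fromRows (1 : Matrix (Fin q) (Fin q) ℝ) Z).PosSemidef} :=
  qmi_solution_set_convex_general q r P11 P12 P22 hneg
end

section
/- Let E ∈ ℝ^{n×d} have full column rank, and let Φ̂ ∈ S^{d+T} be partitioned with Φ̂_{22} < 0. Define Φ ∈ S^{n+T} by Φ_{11} = E Φ̂_{11} Eᵀ, Φ_{12} = E Φ̂_{12}, Φ_{22} = Φ̂_{22}. Then a matrix W ∈ ℝ^{n×T} satisfies W = E Ŵ for some Ŵ ∈ ℝ^{d×T} with [I; Ŵᵀ]ᵀ Φ̂ [I; Ŵᵀ] ≥ 0 if and only if [I; Wᵀ]ᵀ Φ [I; Wᵀ] ≥ 0. -/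
/-!
If `W = E Ŵ`, the `Φ`-form of `W` is the congruence `E (Φ̂-form of Ŵ) Eᵀ`, and a congruence by a
matrix with a left inverse preserves and reflects positive semidefiniteness. Conversely, on
`ker Eᵀ` the `Φ`-form of `W` reduces to the quadratic form of `Φ̂₂₂ < 0` at `Wᵀ x`, so its
semidefiniteness forces `ker Eᵀ ⊆ ker Wᵀ`, i.e. `W = E Ŵ` for some `Ŵ`.
-/

open scoped Matrix

namespace Matrix

variable {m n t : Type*} [Fintype m] [Fintype n] [Fintype t]

theorem isUnit_of_rank_eq_card {K : Type*} [Field K] [DecidableEq n] {A : Matrix n n K}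
    (h : A.rank = Fintype.card n) : IsUnit A := by
  rw [← mulVec_surjective_iff_isUnit, ← coe_mulVecLin, ← LinearMap.range_eq_top]
  apply Submodule.eq_top_of_finrank_eq
  rw [← rank, h, Module.finrank_fintype_fun_eq_card]

theorem fromRows_one_transpose_mul_fromBlocks_mul_fromRows_one {R : Type*} [Semiring R]
    [DecidableEq m] (A : Matrix m m R) (B : Matrix m t R) (C : Matrix t m R) (D : Matrix t t R)
    (V : Matrix m t R) :
    (fromRows (1 : Matrix m m R) Vᵀ)ᵀ * fromBlocks A B C D * fromRows (1 : Matrix m m R) Vᵀ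
      = A + B * Vᵀ + V * C + V * D * Vᵀ := by
  rw [transpose_fromRows, Matrix.mul_assoc, fromBlocks_mul_fromRows, fromCols_mul_fromRows]
  simp only [transpose_one, transpose_transpose, Matrix.one_mul, Matrix.mul_one, Matrix.mul_add,
    Matrix.mul_assoc, add_assoc]

theorem posSemidef_mul_mul_transpose_iff_of_mul_eq_one [DecidableEq m] {E : Matrix n m ℝ}
    {L : Matrix m n ℝ} (hLE : L * E = 1) {P : Matrix m m ℝ} :
    (E * P * Eᵀ).PosSemidef ↔ P.PosSemidef := by
  simp only [← conjTranspose_eq_transpose_of_trivial]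
  refine ⟨fun h => ?_, fun h => h.mul_mul_conjTranspose_same E⟩
  have hPEL : L * (E * P * Eᴴ) * Lᴴ = P := by
    rw [← Matrix.mul_assoc, ← Matrix.mul_assoc, hLE, Matrix.one_mul, Matrix.mul_assoc,
      ← conjTranspose_mul, hLE, conjTranspose_one, Matrix.mul_one]
  exact hPEL ▸ h.mul_mul_conjTranspose_same L

theorem exists_eq_mul_of_transpose_mulVec_eq_zero {E : Matrix n m ℝ} {W : Matrix n t ℝ}
    [DecidableEq m] (hE : IsUnit (Eᵀ * E)) (h : ∀ x, Eᵀ *ᵥ x = 0 → Wᵀ *ᵥ x = 0) :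
    ∃ V : Matrix m t ℝ, W = E * V := by
  set V := (Eᵀ * E)⁻¹ * Eᵀ * W
  -- the residual `W - E V` has its columns in `ker Eᵀ ⊆ ker Wᵀ`, hence `(W - E V)ᵀ (W - E V) = 0`
  have hEtD : Eᵀ * (W - E * V) = 0 := by
    rw [Matrix.mul_sub, ← Matrix.mul_assoc, ← Matrix.mul_assoc, ← Matrix.mul_assoc,
      mul_nonsing_inv _ ((isUnit_iff_isUnit_det _).1 hE), Matrix.one_mul, sub_self]
  have hWtD : Wᵀ * (W - E * V) = 0 := by
    refine ext_iff_mulVec.2 fun v => ?_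
    rw [← mulVec_mulVec, zero_mulVec]
    exact h _ (by rw [mulVec_mulVec, hEtD, zero_mulVec])
  have hDtD : (W - E * V)ᴴ * (W - E * V) = 0 := by
    rw [conjTranspose_eq_transpose_of_trivial, transpose_sub, Matrix.sub_mul, hWtD,
      transpose_mul, Matrix.mul_assoc, hEtD, Matrix.mul_zero, sub_zero]
  exact ⟨V, sub_eq_zero.1 (conjTranspose_mul_self_eq_zero.1 hDtD)⟩

theorem dotProduct_mulVec_eq_of_transpose_mulVec_eq_zero {R : Type*} [CommSemiring R]
    (E : Matrix n m R) (W : Matrix n t R) (A : Matrix m m R) (B : Matrix m t R)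
    (C : Matrix t m R) (D : Matrix t t R) {x : n → R} (hx : Eᵀ *ᵥ x = 0) :
    x ⬝ᵥ ((E * A * Eᵀ + E * B * Wᵀ + W * (C * Eᵀ) + W * D * Wᵀ) *ᵥ x)
      = (Wᵀ *ᵥ x) ⬝ᵥ (D *ᵥ (Wᵀ *ᵥ x)) := by
  simp only [add_mulVec, dotProduct_add, ← mulVec_mulVec, hx, mulVec_zero, dotProduct_zero]
  rw [dotProduct_mulVec x E, ← mulVec_transpose, hx, zero_dotProduct, dotProduct_mulVec x W,
    ← mulVec_transpose, zero_add, zero_add, zero_add]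

theorem transpose_mulVec_eq_zero_of_posSemidef {E : Matrix n m ℝ} {W : Matrix n t ℝ}
    {A : Matrix m m ℝ} {B : Matrix m t ℝ} {C : Matrix t m ℝ} {D : Matrix t t ℝ} (hD : (-D).PosDef)
    (hN : (E * A * Eᵀ + E * B * Wᵀ + W * (C * Eᵀ) + W * D * Wᵀ).PosSemidef) {x : n → ℝ}
    (hx : Eᵀ *ᵥ x = 0) : Wᵀ *ᵥ x = 0 := by
  by_contra hy
  have hnonneg := hN.dotProduct_mulVec_nonneg x
  have hneg := hD.dotProduct_mulVec_pos hy
  rw [star_trivial, dotProduct_mulVec_eq_of_transpose_mulVec_eq_zero E W A B C D hx] at hnonneg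
  rw [star_trivial, neg_mulVec, dotProduct_neg] at hneg
  linarith

end Matrix

open Matrix

theorem noise_in_subspace_qmi_general
    (n d T : ℕ)
    (E : Matrix (Fin n) (Fin d) ℝ) (hE : E.rank = d)
    (F11 : Matrix (Fin d) (Fin d) ℝ) (F12 : Matrix (Fin d) (Fin T) ℝ)
    (F22 : Matrix (Fin T) (Fin T) ℝ)
    (hF22 : (-F22).PosDef)
    (W : Matrix (Fin n) (Fin T) ℝ) :
    (∃ Wh : Matrix (Fin d) (Fin T) ℝ, W = E * Wh ∧
      ((Matrix.fromRows (1 : Matrix (Fin d) (Fin d) ℝ) Whᵀ)ᵀ *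
        Matrix.fromBlocks F11 F12 F12ᵀ F22 *
        Matrix.fromRows (1 : Matrix (Fin d) (Fin d) ℝ) Whᵀ).PosSemidef)
    ↔ ((Matrix.fromRows (1 : Matrix (Fin n) (Fin n) ℝ) Wᵀ)ᵀ *
        Matrix.fromBlocks (E * F11 * Eᵀ) (E * F12) ((E * F12)ᵀ) F22 *
        Matrix.fromRows (1 : Matrix (Fin n) (Fin n) ℝ) Wᵀ).PosSemidef := by
  have hG : IsUnit (Eᵀ * E) :=
    isUnit_of_rank_eq_card (by rw [rank_transpose_mul_self, hE, Fintype.card_fin])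
  have hLE : (Eᵀ * E)⁻¹ * Eᵀ * E = 1 := by
    rw [Matrix.mul_assoc, nonsing_inv_mul _ ((isUnit_iff_isUnit_det _).1 hG)]
  have hconj : ∀ Wh : Matrix (Fin d) (Fin T) ℝ,
      E * F11 * Eᵀ + E * F12 * (E * Wh)ᵀ + E * Wh * (F12ᵀ * Eᵀ) + E * Wh * F22 * (E * Wh)ᵀ
        = E * (F11 + F12 * Whᵀ + Wh * F12ᵀ + Wh * F22 * Whᵀ) * Eᵀ := fun Wh => by
    simp only [transpose_mul, Matrix.mul_add, Matrix.add_mul, Matrix.mul_assoc]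
  simp only [fromRows_one_transpose_mul_fromBlocks_mul_fromRows_one, transpose_mul E F12]
  constructor
  · rintro ⟨Wh, rfl, hP⟩
    rw [hconj]
    exact (posSemidef_mul_mul_transpose_iff_of_mul_eq_one hLE).2 hP
  · intro hN
    obtain ⟨Wh, rfl⟩ := exists_eq_mul_of_transpose_mulVec_eq_zero hG
      fun _ => transpose_mulVec_eq_zero_of_posSemidef hF22 hN
    rw [hconj] at hN
    exact ⟨Wh, rfl, (posSemidef_mul_mul_transpose_iff_of_mul_eq_one hLE).1 hN⟩

/-- Noise confined to a known subspace im E: W = EŴ for some Ŵ satisfying the QMI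
given by Φ̂ (with Φ̂₂₂ ≺ 0) iff W satisfies the QMI given by
Φ = [[EΦ̂₁₁Eᵀ, EΦ̂₁₂],[Φ̂₂₁Eᵀ, Φ̂₂₂]]. -/
theorem noise_in_subspace_qmi
    (n d T : ℕ)
    (E : Matrix (Fin n) (Fin d) ℝ) (hE : E.rank = d)
    (F11 : Matrix (Fin d) (Fin d) ℝ) (F12 : Matrix (Fin d) (Fin T) ℝ)
    (F22 : Matrix (Fin T) (Fin T) ℝ)
    (h11 : F11ᵀ = F11) (h22 : F22ᵀ = F22)
    (hF22 : (-F22).PosDef)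
    (W : Matrix (Fin n) (Fin T) ℝ) :
    (∃ Wh : Matrix (Fin d) (Fin T) ℝ, W = E * Wh ∧
      ((Matrix.fromRows (1 : Matrix (Fin d) (Fin d) ℝ) Whᵀ)ᵀ *
        Matrix.fromBlocks F11 F12 F12ᵀ F22 *
        Matrix.fromRows (1 : Matrix (Fin d) (Fin d) ℝ) Whᵀ).PosSemidef)
    ↔ ((Matrix.fromRows (1 : Matrix (Fin n) (Fin n) ℝ) Wᵀ)ᵀ *
        Matrix.fromBlocks (E * F11 * Eᵀ) (E * F12) ((E * F12)ᵀ) F22 *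
        Matrix.fromRows (1 : Matrix (Fin n) (Fin n) ℝ) Wᵀ).PosSemidef :=
  noise_in_subspace_qmi_general n d T E hE F11 F12 F22 hF22 W
end

section
/- (Dualization of the dissipation inequality) Let P ∈ S^n with P > 0, S ∈ S^{m+p} nonsingular with inertia (p,0,m) (p negative and m positive eigenvalues), and A ∈ ℝ^{n×n}, B ∈ ℝ^{n×m}, C ∈ ℝ^{p×n}, D ∈ ℝ^{p×m}. Define Ŝ := [[0, -I_p],[I_m, 0]] S^{-1} [[0, -I_m],[I_p, 0]]. Then [I,0;A,B]ᵀ diag(P,-P) [I,0;A,B] + [0,I;C,D]ᵀ S [0,I;C,D] ≥ 0 holds if and only if [I,0;Aᵀ,Cᵀ]ᵀ diag(P^{-1},-P^{-1}) [I,0;Aᵀ,Cᵀ] + [0,I;Bᵀ,Dᵀ]ᵀ Ŝ [0,I;Bᵀ,Dᵀ] ≥ 0. -/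
/-!
Write the primal inequality as `Uᵀ Θ U ⪰ 0` with `Θ = diag(P, -P, S)` and
`U = [I 0; A B; 0 I; C D]`. Rotating both block row pairs of the dual factor
`[I 0; Aᵀ Cᵀ; 0 I; Bᵀ Dᵀ]` by `[0 -I; I 0]` gives `W = [-Aᵀ -Cᵀ; I 0; -Bᵀ -Dᵀ; 0 I]` and turns
`diag(P⁻¹, -P⁻¹)` and `Ŝ` into `-diag(P⁻¹, -P⁻¹)` and `-S⁻¹`, so the dual inequality is
`-Wᵀ Θ⁻¹ W ⪰ 0`. Moreover `Wᵀ U = 0`, and by the inertia hypothesis `Θ` has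
`n + m = dim range U` positive and `n + p = dim range W` negative eigenvalues.

If the form of `Θ` is nonnegative on a subspace `V` of codimension equal to the number of negative
eigenvalues, and `y ⟂ V` had `yᵀ Θ⁻¹ y > 0`, then `z = Θ⁻¹ y` would span together with `V` a larger
subspace on which the form is still nonnegative, and this subspace would meet a negative definite
subspace. Hence `Θ⁻¹` is nonpositive on `V⟂`. The converse is the same argument for `-Θ⁻¹`, whose
negative definite subspaces are the images under `Θ` of the positive definite subspaces of `Θ`.
-/

open scoped Matrix

open Matrix Module

namespace Matrix

theorem nonsing_inv_neg {n α : Type*} [Fintype n] [DecidableEq n] [CommRing α]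
    (A : Matrix n n α) : (-A)⁻¹ = -A⁻¹ := by
  by_cases h : IsUnit A.det
  · exact inv_eq_left_inv (by rw [neg_mul_neg, nonsing_inv_mul _ h])
  · have h' : ¬IsUnit (-A).det := by
      rwa [det_neg, (isUnit_neg_one.pow _).mul_left_iff]
    rw [nonsing_inv_apply_not_isUnit _ h, nonsing_inv_apply_not_isUnit _ h', neg_zero]

theorem mulVec_injective_of_submatrix_eq_one {N γ R : Type*} [Fintype γ] [DecidableEq γ]
    [NonAssocSemiring R] {M : Matrix N γ R} {f : γ → N} (h : M.submatrix f id = 1) :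
    Function.Injective M.mulVec := by
  intro x y hxy
  funext i
  have : (M.submatrix f id *ᵥ x) i = (M.submatrix f id *ᵥ y) i := congrFun hxy (f i)
  rwa [h, one_mulVec, one_mulVec] at this

section Blocks

variable {R : Type*} [CommSemiring R] {l l₁ l₂ m₁ m₂ : Type*} [Fintype m₁] [Fintype m₂]

theorem transpose_fromRows_mul_fromBlocks_mul_fromRows (Θ₁ : Matrix m₁ m₁ R)
    (Θ₂ : Matrix m₂ m₂ R) (X : Matrix m₁ l R) (Y : Matrix m₂ l R) :
    (fromRows X Y)ᵀ * fromBlocks Θ₁ 0 0 Θ₂ * fromRows X Y = Xᵀ * Θ₁ * X + Yᵀ * Θ₂ * Y := by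
  rw [transpose_fromRows, fromCols_mul_fromBlocks, fromCols_mul_fromRows]
  simp

theorem transpose_fromBlocks_mul_fromBlocks_mul_fromBlocks (Θ₁ : Matrix m₁ m₁ R)
    (Θ₂ : Matrix m₂ m₂ R) (X : Matrix m₁ l₁ R) (Y : Matrix m₂ l₂ R) :
    (fromBlocks X 0 0 Y)ᵀ * fromBlocks Θ₁ 0 0 Θ₂ * fromBlocks X 0 0 Y =
      fromBlocks (Xᵀ * Θ₁ * X) 0 0 (Yᵀ * Θ₂ * Y) := by
  simp [fromBlocks_transpose, fromBlocks_multiply]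

end Blocks

theorem PosDef.fromBlocks_zero {m n : Type*} [Fintype m] [Fintype n] [DecidableEq m]
    [DecidableEq n] {A : Matrix m m ℝ} {D : Matrix n n ℝ} (hA : A.PosDef) (hD : D.PosDef) :
    (fromBlocks A 0 0 D).PosDef := by
  have hpsd : (fromBlocks A 0 0ᴴ D).PosSemidef := by
    have := hA.isUnit.invertible
    rw [PosDef.fromBlocks₁₁ _ _ hA]
    simpa using hD.posSemidef
  rw [conjTranspose_zero] at hpsd
  rw [hpsd.posDef_iff_isUnit, isUnit_fromBlocks_zero₂₁]
  exact ⟨hA.isUnit, hD.isUnit⟩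

section Eigen

variable {ι : Type*} [Fintype ι] [DecidableEq ι] {S : Matrix ι ι ℝ}

theorem IsHermitian.transpose_mul_mul_eigenvectorUnitary_submatrix (hS : S.IsHermitian)
    (q : ι → Prop) :
    ((hS.eigenvectorUnitary : Matrix ι ι ℝ).submatrix id (Subtype.val : {i // q i} → ι))ᵀ * S *
        (hS.eigenvectorUnitary : Matrix ι ι ℝ).submatrix id Subtype.val =
      diagonal fun i : {i // q i} => hS.eigenvalues i := by
  have h := hS.conjStarAlgAut_star_eigenvectorUnitary
  rw [Unitary.conjStarAlgAut_star_apply, star_eq_conjTranspose,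
    conjTranspose_eq_transpose_of_trivial] at h
  change ((hS.eigenvectorUnitary : Matrix ι ι ℝ)ᵀ * S * hS.eigenvectorUnitary).submatrix
    Subtype.val Subtype.val = _
  rw [h, submatrix_diagonal _ _ Subtype.val_injective]
  rfl

theorem IsHermitian.exists_posDef_transpose_mul_mul (hS : S.IsHermitian) :
    ∃ E : Matrix ι {i // 0 < hS.eigenvalues i} ℝ, (Eᵀ * S * E).PosDef :=
  ⟨(hS.eigenvectorUnitary : Matrix ι ι ℝ).submatrix id Subtype.val, by
    rw [hS.transpose_mul_mul_eigenvectorUnitary_submatrix, posDef_diagonal_iff]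
    exact fun i => i.2⟩

theorem IsHermitian.exists_posDef_transpose_mul_neg_mul (hS : S.IsHermitian) :
    ∃ E : Matrix ι {i // hS.eigenvalues i < 0} ℝ, (Eᵀ * (-S) * E).PosDef :=
  ⟨(hS.eigenvectorUnitary : Matrix ι ι ℝ).submatrix id Subtype.val, by
    rw [Matrix.mul_neg, Matrix.neg_mul, hS.transpose_mul_mul_eigenvectorUnitary_submatrix,
      diagonal_neg, posDef_diagonal_iff]
    exact fun i => neg_pos.mpr i.2⟩

theorem IsHermitian.isUnit_of_ncard_neg_add_ncard_pos (hS : S.IsHermitian)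
    (h : {i | hS.eigenvalues i < 0}.ncard + {i | 0 < hS.eigenvalues i}.ncard = Fintype.card ι) :
    IsUnit S := by
  rw [isUnit_iff_isUnit_det, hS.det_eq_prod_eigenvalues, isUnit_iff_ne_zero]
  refine Finset.prod_ne_zero_iff.mpr fun i _ (hi : hS.eigenvalues i = 0) => ?_
  have hlt : {i | hS.eigenvalues i < 0} ∪ {i | 0 < hS.eigenvalues i} ⊂ Set.univ :=
    Set.ssubset_univ_iff.mpr fun huniv => by
      simpa [hi] using Set.eq_univ_iff_forall.mp huniv i
  have hdisj : Disjoint {i | hS.eigenvalues i < 0} {i | 0 < hS.eigenvalues i} :=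
    Set.disjoint_left.mpr fun _ h₁ h₂ => lt_asymm (Set.mem_ofPred.mp h₁) (Set.mem_ofPred.mp h₂)
  have := Set.ncard_lt_ncard hlt
  rw [Set.ncard_union_eq hdisj, Set.ncard_univ, Nat.card_eq_fintype_card] at this
  omega

end Eigen

section Dualization

variable {N γ δ κ : Type*} [Fintype N] [Fintype γ] [Fintype δ] [Fintype κ]

theorem dotProduct_transpose_mul_mul_mulVec {R : Type*} [CommSemiring R] (E : Matrix N γ R)
    (M : Matrix N N R) (x : γ → R) :
    x ⬝ᵥ (Eᵀ * M * E) *ᵥ x = (E *ᵥ x) ⬝ᵥ M *ᵥ (E *ᵥ x) := by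
  rw [← mulVec_mulVec, ← mulVec_mulVec, dotProduct_mulVec, vecMul_transpose]

theorem mulVec_injective_of_posDef_transpose_mul_mul {M : Matrix N N ℝ} {E : Matrix N κ ℝ}
    (hE : (Eᵀ * M * E).PosDef) : Function.Injective E.mulVec := by
  refine (injective_iff_map_eq_zero E.mulVecLin).mpr fun x hx => ?_
  by_contra hx0
  have := hE.dotProduct_mulVec_pos hx0
  rw [star_trivial, dotProduct_transpose_mul_mul_mulVec] at this
  simp_all

theorem finrank_add_card_le_of_nonneg_of_posDef_neg {Θ : Matrix N N ℝ}
    {V : Submodule ℝ (N → ℝ)} (hV : ∀ v ∈ V, 0 ≤ v ⬝ᵥ Θ *ᵥ v)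
    {E : Matrix N κ ℝ} (hE : (Eᵀ * (-Θ) * E).PosDef) :
    finrank ℝ V + Fintype.card κ ≤ Fintype.card N := by
  have hdisj : Disjoint V (LinearMap.range E.mulVecLin) := by
    rw [Submodule.disjoint_def]
    rintro _ hv ⟨x, rfl⟩
    rw [mulVecLin_apply] at hv ⊢
    by_contra hx
    have hx0 : x ≠ 0 := by rintro rfl; simp at hx
    have := hE.dotProduct_mulVec_pos hx0
    rw [star_trivial, dotProduct_transpose_mul_mul_mulVec, neg_mulVec, dotProduct_neg] at this
    linarith [hV _ hv]
  have := Submodule.finrank_add_finrank_le_of_disjoint hdisj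
  rwa [LinearMap.finrank_range_of_inj (mulVec_injective_of_posDef_transpose_mul_mul hE),
    finrank_fintype_fun_eq_card, finrank_fintype_fun_eq_card] at this

theorem dotProduct_inv_mulVec_nonpos_of_orthogonal [DecidableEq N] {Θ : Matrix N N ℝ}
    (hΘ : Θ.IsHermitian) (hdet : IsUnit Θ.det)
    {V : Submodule ℝ (N → ℝ)} (hV : ∀ v ∈ V, 0 ≤ v ⬝ᵥ Θ *ᵥ v)
    {E : Matrix N κ ℝ} (hE : (Eᵀ * (-Θ) * E).PosDef)
    (hcard : Fintype.card N ≤ finrank ℝ V + Fintype.card κ)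
    {y : N → ℝ} (hy : ∀ v ∈ V, y ⬝ᵥ v = 0) :
    y ⬝ᵥ Θ⁻¹ *ᵥ y ≤ 0 := by
  by_contra! hpos
  set z := Θ⁻¹ *ᵥ y
  have hΘz : Θ *ᵥ z = y := by rw [mulVec_mulVec, mul_nonsing_inv _ hdet, one_mulVec]
  have hz : z ∉ V := fun hz => by linarith [hy z hz]
  have hV' : ∀ v ∈ V ⊔ Submodule.span ℝ {z}, 0 ≤ v ⬝ᵥ Θ *ᵥ v := by
    intro v hv
    obtain ⟨u, hu, _, hw, rfl⟩ := Submodule.mem_sup.mp hv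
    obtain ⟨c, rfl⟩ := Submodule.mem_span_singleton.mp hw
    have huy : u ⬝ᵥ y = 0 := by rw [dotProduct_comm]; exact hy u hu
    have hzu : z ⬝ᵥ Θ *ᵥ u = 0 := by
      rw [dotProduct_mulVec, ← mulVec_transpose, (isHermitian_iff_isSymm.mp hΘ).eq, hΘz,
        dotProduct_comm, huy]
    have : (u + c • z) ⬝ᵥ Θ *ᵥ (u + c • z) = u ⬝ᵥ Θ *ᵥ u + c ^ 2 * (y ⬝ᵥ z) := by
      simp only [mulVec_add, mulVec_smul, dotProduct_add, add_dotProduct, dotProduct_smul,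
        smul_dotProduct, smul_eq_mul, hzu, hΘz, huy, dotProduct_comm z y]
      ring
    rw [this]
    have := hV u hu
    positivity
  have hlt : finrank ℝ V < finrank ℝ ↥(V ⊔ Submodule.span ℝ {z}) :=
    Submodule.finrank_lt_finrank_of_lt
      (left_lt_sup.mpr fun h => hz (Submodule.span_singleton_le_iff_mem _ _ |>.mp h))
  have := finrank_add_card_le_of_nonneg_of_posDef_neg hV' hE
  omega

theorem posSemidef_neg_transpose_mul_inv_mul_of_posSemidef [DecidableEq N] {Θ : Matrix N N ℝ}
    (hΘ : Θ.IsHermitian) (hdet : IsUnit Θ.det)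
    {E : Matrix N κ ℝ} (hE : (Eᵀ * (-Θ) * E).PosDef)
    {U : Matrix N γ ℝ} (hU : Function.Injective U.mulVec)
    (hcard : Fintype.card N ≤ Fintype.card γ + Fintype.card κ)
    {W : Matrix N δ ℝ} (hWU : Wᵀ * U = 0) (hUΘU : (Uᵀ * Θ * U).PosSemidef) :
    (-(Wᵀ * Θ⁻¹ * W)).PosSemidef := by
  have hherm : (-(Wᵀ * Θ⁻¹ * W)).IsHermitian := by
    simpa using (isHermitian_conjTranspose_mul_mul W hΘ.inv).neg
  refine .of_dotProduct_mulVec_nonneg hherm fun x => ?_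
  rw [star_trivial, neg_mulVec, dotProduct_neg, dotProduct_transpose_mul_mul_mulVec,
    neg_nonneg]
  refine dotProduct_inv_mulVec_nonpos_of_orthogonal hΘ hdet (V := LinearMap.range U.mulVecLin)
    ?_ hE ?_ ?_
  · rintro _ ⟨v, rfl⟩
    simpa [dotProduct_transpose_mul_mul_mulVec] using hUΘU.dotProduct_mulVec_nonneg v
  · rwa [LinearMap.finrank_range_of_inj hU, finrank_fintype_fun_eq_card]
  · rintro _ ⟨v, rfl⟩
    rw [mulVecLin_apply, dotProduct_comm, dotProduct_mulVec, ← mulVec_transpose, mulVec_mulVec,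
      hWU]
    simp

theorem posSemidef_transpose_mul_mul_iff_posSemidef_neg_transpose_mul_inv_mul [DecidableEq N]
    {κₚ κₙ : Type*} [Fintype κₚ] [Fintype κₙ] {Θ : Matrix N N ℝ}
    (hΘ : Θ.IsHermitian) (hdet : IsUnit Θ.det)
    {Eₚ : Matrix N κₚ ℝ} (hEₚ : (Eₚᵀ * Θ * Eₚ).PosDef)
    {Eₙ : Matrix N κₙ ℝ} (hEₙ : (Eₙᵀ * (-Θ) * Eₙ).PosDef)
    {U : Matrix N γ ℝ} (hU : Function.Injective U.mulVec)
    (hUcard : Fintype.card N ≤ Fintype.card γ + Fintype.card κₙ)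
    {W : Matrix N δ ℝ} (hW : Function.Injective W.mulVec)
    (hWcard : Fintype.card N ≤ Fintype.card δ + Fintype.card κₚ)
    (hWU : Wᵀ * U = 0) :
    (Uᵀ * Θ * U).PosSemidef ↔ (-(Wᵀ * Θ⁻¹ * W)).PosSemidef := by
  refine ⟨posSemidef_neg_transpose_mul_inv_mul_of_posSemidef hΘ hdet hEₙ hU hUcard hWU,
    fun h => ?_⟩
  have hΘEₚ : ((Θ * Eₚ)ᵀ * (-(-Θ⁻¹)) * (Θ * Eₚ)).PosDef := by
    rwa [neg_neg, transpose_mul, (isHermitian_iff_isSymm.mp hΘ).eq, Matrix.mul_assoc,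
      ← Matrix.mul_assoc Θ⁻¹, nonsing_inv_mul _ hdet, Matrix.one_mul]
  have := posSemidef_neg_transpose_mul_inv_mul_of_posSemidef hΘ.inv.neg
    (by simp [det_neg, isUnit_iff_ne_zero, hdet.ne_zero]) hΘEₚ hW hWcard
    (by simpa using congrArg transpose hWU) (by rwa [Matrix.mul_neg, Matrix.neg_mul])
  rwa [nonsing_inv_neg, nonsing_inv_nonsing_inv _ hdet, Matrix.mul_neg, Matrix.neg_mul,
    neg_neg] at this

end Dualization

end Matrix

namespace Dissipativity

variable {n m p : Type*}

theorem mulVec_injective_primal_factor [Fintype n] [DecidableEq n] [Fintype m] [DecidableEq m]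
    (A : Matrix n n ℝ) (B : Matrix n m ℝ) (C : Matrix p n ℝ) (D : Matrix p m ℝ) :
    Function.Injective (fromRows (fromBlocks (1 : Matrix n n ℝ) (0 : Matrix n m ℝ) A B)
      (fromBlocks (0 : Matrix m n ℝ) (1 : Matrix m m ℝ) C D)).mulVec :=
  mulVec_injective_of_submatrix_eq_one (f := Sum.elim (Sum.inl ∘ Sum.inl) (Sum.inr ∘ Sum.inl))
    (by ext (i | i) (j | j) <;> simp [one_apply])

theorem mulVec_injective_annihilator [Fintype n] [DecidableEq n] [Fintype p] [DecidableEq p]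
    (A : Matrix n n ℝ) (B : Matrix n m ℝ) (C : Matrix p n ℝ) (D : Matrix p m ℝ) :
    Function.Injective (fromRows (fromBlocks (-Aᵀ) (-Cᵀ) (1 : Matrix n n ℝ) (0 : Matrix n p ℝ))
      (fromBlocks (-Bᵀ) (-Dᵀ) (0 : Matrix p n ℝ) (1 : Matrix p p ℝ))).mulVec :=
  mulVec_injective_of_submatrix_eq_one (f := Sum.elim (Sum.inl ∘ Sum.inr) (Sum.inr ∘ Sum.inr))
    (by ext (i | i) (j | j) <;> simp [one_apply])

theorem transpose_annihilator_mul_primal_factor [Fintype n] [Fintype m] [Fintype p]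
    [DecidableEq n] [DecidableEq m] [DecidableEq p] (A : Matrix n n ℝ) (B : Matrix n m ℝ)
    (C : Matrix p n ℝ) (D : Matrix p m ℝ) :
    (fromRows (fromBlocks (-Aᵀ) (-Cᵀ) (1 : Matrix n n ℝ) (0 : Matrix n p ℝ))
      (fromBlocks (-Bᵀ) (-Dᵀ) (0 : Matrix p n ℝ) (1 : Matrix p p ℝ)))ᵀ *
      fromRows (fromBlocks (1 : Matrix n n ℝ) (0 : Matrix n m ℝ) A B)
        (fromBlocks (0 : Matrix m n ℝ) (1 : Matrix m m ℝ) C D) = 0 := by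
  simp [transpose_fromRows, fromCols_mul_fromRows, fromBlocks_transpose, fromBlocks_multiply,
    fromBlocks_add]

theorem dual_storage_term_eq_neg [Fintype n] [DecidableEq n] [Fintype p] (A : Matrix n n ℝ)
    (C : Matrix p n ℝ) (Q : Matrix n n ℝ) :
    (fromBlocks (1 : Matrix n n ℝ) (0 : Matrix n p ℝ) Aᵀ Cᵀ)ᵀ * fromBlocks Q 0 0 (-Q) *
        fromBlocks (1 : Matrix n n ℝ) (0 : Matrix n p ℝ) Aᵀ Cᵀ =
      -((fromBlocks (-Aᵀ) (-Cᵀ) (1 : Matrix n n ℝ) (0 : Matrix n p ℝ))ᵀ * fromBlocks Q 0 0 (-Q) *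
        fromBlocks (-Aᵀ) (-Cᵀ) (1 : Matrix n n ℝ) (0 : Matrix n p ℝ)) := by
  simp [fromBlocks_transpose, fromBlocks_multiply, fromBlocks_neg, Matrix.mul_assoc]

theorem dual_supply_term_eq_neg [Fintype m] [Fintype p] [DecidableEq m] [DecidableEq p]
    (B : Matrix n m ℝ) (D : Matrix p m ℝ) (R : Matrix (m ⊕ p) (m ⊕ p) ℝ) :
    (fromBlocks (0 : Matrix p n ℝ) (1 : Matrix p p ℝ) Bᵀ Dᵀ)ᵀ *
        (fromBlocks (0 : Matrix p m ℝ) (-(1 : Matrix p p ℝ)) (1 : Matrix m m ℝ)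
            (0 : Matrix m p ℝ) * R *
          fromBlocks (0 : Matrix m p ℝ) (-(1 : Matrix m m ℝ)) (1 : Matrix p p ℝ)
            (0 : Matrix p m ℝ)) *
        fromBlocks (0 : Matrix p n ℝ) (1 : Matrix p p ℝ) Bᵀ Dᵀ =
      -((fromBlocks (-Bᵀ) (-Dᵀ) (0 : Matrix p n ℝ) (1 : Matrix p p ℝ))ᵀ * R *
        fromBlocks (-Bᵀ) (-Dᵀ) (0 : Matrix p n ℝ) (1 : Matrix p p ℝ)) := by
  set W₂ := fromBlocks (-Bᵀ) (-Dᵀ) (0 : Matrix p n ℝ) (1 : Matrix p p ℝ)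
  have hleft : (fromBlocks (0 : Matrix p n ℝ) (1 : Matrix p p ℝ) Bᵀ Dᵀ)ᵀ *
      fromBlocks (0 : Matrix p m ℝ) (-(1 : Matrix p p ℝ)) (1 : Matrix m m ℝ) (0 : Matrix m p ℝ) =
        -W₂ᵀ := by
    simp [W₂, fromBlocks_transpose, fromBlocks_multiply, fromBlocks_neg]
  have hright :
      fromBlocks (0 : Matrix m p ℝ) (-(1 : Matrix m m ℝ)) (1 : Matrix p p ℝ) (0 : Matrix p m ℝ) *
        fromBlocks (0 : Matrix p n ℝ) (1 : Matrix p p ℝ) Bᵀ Dᵀ = W₂ := by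
    simp [W₂, fromBlocks_multiply]
  rw [← Matrix.mul_assoc, ← Matrix.mul_assoc, hleft, Matrix.mul_assoc, hright, Matrix.neg_mul,
    Matrix.neg_mul]

theorem isHermitian_storage_supply {ι : Type*} {P : Matrix n n ℝ} {S : Matrix ι ι ℝ}
    (hP : P.IsHermitian) (hS : S.IsHermitian) :
    (fromBlocks (fromBlocks P 0 0 (-P)) 0 0 S).IsHermitian :=
  (hP.fromBlocks (by simp) hP.neg).fromBlocks (by simp) hS

section Compression

variable [Fintype n] [DecidableEq n] {ι : Type*} [Fintype ι] [DecidableEq ι] {P : Matrix n n ℝ}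
  {S : Matrix ι ι ℝ}

theorem exists_posDef_compression (hP : P.PosDef) (hS : S.IsHermitian) :
    ∃ E : Matrix ((n ⊕ n) ⊕ ι) (n ⊕ {i // 0 < hS.eigenvalues i}) ℝ,
      (Eᵀ * fromBlocks (fromBlocks P 0 0 (-P)) 0 0 S * E).PosDef := by
  obtain ⟨E, hE⟩ := hS.exists_posDef_transpose_mul_mul
  refine ⟨fromBlocks (fromRows (1 : Matrix n n ℝ) 0) 0 0 E, ?_⟩
  rw [transpose_fromBlocks_mul_fromBlocks_mul_fromBlocks]
  refine PosDef.fromBlocks_zero ?_ hE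
  simpa [transpose_fromRows_mul_fromBlocks_mul_fromRows] using hP

theorem exists_posDef_neg_compression (hP : P.PosDef) (hS : S.IsHermitian) :
    ∃ E : Matrix ((n ⊕ n) ⊕ ι) (n ⊕ {i // hS.eigenvalues i < 0}) ℝ,
      (Eᵀ * (-fromBlocks (fromBlocks P 0 0 (-P)) 0 0 S) * E).PosDef := by
  obtain ⟨E, hE⟩ := hS.exists_posDef_transpose_mul_neg_mul
  refine ⟨fromBlocks (fromRows 0 (1 : Matrix n n ℝ)) 0 0 E, ?_⟩
  simp only [fromBlocks_neg, neg_zero, neg_neg]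
  rw [transpose_fromBlocks_mul_fromBlocks_mul_fromBlocks]
  refine PosDef.fromBlocks_zero ?_ hE
  simpa [transpose_fromRows_mul_fromBlocks_mul_fromRows] using hP

theorem isUnit_storage_supply (hP : IsUnit P) (hS : IsUnit S) :
    IsUnit (fromBlocks (fromBlocks P 0 0 (-P)) 0 0 S) :=
  isUnit_fromBlocks_zero₂₁.mpr ⟨isUnit_fromBlocks_zero₂₁.mpr ⟨hP, hP.neg⟩, hS⟩

theorem inv_storage_supply (hP : IsUnit P) (hS : IsUnit S) :
    (fromBlocks (fromBlocks P 0 0 (-P)) 0 0 S)⁻¹ =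
      fromBlocks (fromBlocks P⁻¹ 0 0 (-P⁻¹)) 0 0 S⁻¹ := by
  rw [inv_fromBlocks_zero₂₁_of_isUnit_iff _ _ _
      (iff_of_true (isUnit_fromBlocks_zero₂₁.mpr ⟨hP, hP.neg⟩) hS),
    inv_fromBlocks_zero₂₁_of_isUnit_iff _ _ _ (iff_of_true hP hP.neg), nonsing_inv_neg]
  simp

end Compression

end Dissipativity

open Dissipativity

/-- Dualization of the dissipation inequality: for P ≻ 0 and a supply rate S with
inertia (p,0,m), the system (A,B,C,D) satisfies the dissipation LMI with storage P
and supply S iff the dual system (Aᵀ,Cᵀ,Bᵀ,Dᵀ) satisfies the dissipation LMI with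
storage P⁻¹ and supply Ŝ = [[0,-I_p],[I_m,0]] S⁻¹ [[0,-I_m],[I_p,0]]. -/
theorem dualization_of_dissipation_inequality
    (n m p : ℕ)
    (P : Matrix (Fin n) (Fin n) ℝ) (hP : P.PosDef)
    (S : Matrix (Fin m ⊕ Fin p) (Fin m ⊕ Fin p) ℝ) (hS : S.IsHermitian)
    (hinertia_neg : {i : Fin m ⊕ Fin p | hS.eigenvalues i < 0}.ncard = p)
    (hinertia_pos : {i : Fin m ⊕ Fin p | 0 < hS.eigenvalues i}.ncard = m)
    (A : Matrix (Fin n) (Fin n) ℝ) (B : Matrix (Fin n) (Fin m) ℝ)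
    (C : Matrix (Fin p) (Fin n) ℝ) (D : Matrix (Fin p) (Fin m) ℝ) :
    ((Matrix.fromBlocks (1 : Matrix (Fin n) (Fin n) ℝ) (0 : Matrix (Fin n) (Fin m) ℝ) A B)ᵀ *
        Matrix.fromBlocks P 0 0 (-P) *
        Matrix.fromBlocks (1 : Matrix (Fin n) (Fin n) ℝ) (0 : Matrix (Fin n) (Fin m) ℝ) A B
      + (Matrix.fromBlocks (0 : Matrix (Fin m) (Fin n) ℝ) (1 : Matrix (Fin m) (Fin m) ℝ) C D)ᵀ *
        S *
        Matrix.fromBlocks (0 : Matrix (Fin m) (Fin n) ℝ) (1 : Matrix (Fin m) (Fin m) ℝ) C D).PosSemidef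
    ↔ ((Matrix.fromBlocks (1 : Matrix (Fin n) (Fin n) ℝ) (0 : Matrix (Fin n) (Fin p) ℝ) Aᵀ Cᵀ)ᵀ *
        Matrix.fromBlocks P⁻¹ 0 0 (-P⁻¹) *
        Matrix.fromBlocks (1 : Matrix (Fin n) (Fin n) ℝ) (0 : Matrix (Fin n) (Fin p) ℝ) Aᵀ Cᵀ
      + (Matrix.fromBlocks (0 : Matrix (Fin p) (Fin n) ℝ) (1 : Matrix (Fin p) (Fin p) ℝ) Bᵀ Dᵀ)ᵀ *
        (Matrix.fromBlocks (0 : Matrix (Fin p) (Fin m) ℝ) (-(1 : Matrix (Fin p) (Fin p) ℝ))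
            (1 : Matrix (Fin m) (Fin m) ℝ) (0 : Matrix (Fin m) (Fin p) ℝ) *
          S⁻¹ *
          Matrix.fromBlocks (0 : Matrix (Fin m) (Fin p) ℝ) (-(1 : Matrix (Fin m) (Fin m) ℝ))
            (1 : Matrix (Fin p) (Fin p) ℝ) (0 : Matrix (Fin p) (Fin m) ℝ)) *
        Matrix.fromBlocks (0 : Matrix (Fin p) (Fin n) ℝ) (1 : Matrix (Fin p) (Fin p) ℝ) Bᵀ Dᵀ).PosSemidef := by
  have hSu : IsUnit S :=
    hS.isUnit_of_ncard_neg_add_ncard_pos (by simp [hinertia_neg, hinertia_pos, add_comm])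
  have hcard_neg : Fintype.card {i // hS.eigenvalues i < 0} = p := by
    rw [← Nat.card_eq_fintype_card]; exact (Nat.card_coe_set_eq _).trans hinertia_neg
  have hcard_pos : Fintype.card {i // 0 < hS.eigenvalues i} = m := by
    rw [← Nat.card_eq_fintype_card]; exact (Nat.card_coe_set_eq _).trans hinertia_pos
  obtain ⟨Eₚ, hEₚ⟩ := exists_posDef_compression hP hS
  obtain ⟨Eₙ, hEₙ⟩ := exists_posDef_neg_compression hP hS
  rw [dual_storage_term_eq_neg, dual_supply_term_eq_neg, ← neg_add,
    ← transpose_fromRows_mul_fromBlocks_mul_fromRows,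
    ← transpose_fromRows_mul_fromBlocks_mul_fromRows, ← inv_storage_supply hP.isUnit hSu]
  refine posSemidef_transpose_mul_mul_iff_posSemidef_neg_transpose_mul_inv_mul
    (isHermitian_storage_supply hP.1 hS)
    ((isUnit_iff_isUnit_det _).mp (isUnit_storage_supply hP.isUnit hSu)) hEₚ hEₙ
    (mulVec_injective_primal_factor A B C D) (by simp [hcard_neg]; omega)
    (mulVec_injective_annihilator A B C D) (by simp [hcard_pos]; omega)
    (transpose_annihilator_mul_primal_factor A B C D)
end
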